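/- arXiv:1510.05995 — 4 statements merged into one kernel-verified Lean document; each statement's English description precedes it below -/
import Mathlib

section
/- There exists a constant C > 0 such that for every n ≥ 2, in the frog model on the complete graph with self-loops on n vertices, the expected time to wake at least half of the frogs satisfies E[τ_{n/2}] ≤ C·log n, where τ_{n/2} = inf{t : 2·|A_t| ≥ n}. -/
open MeasureTheory ProbabilityTheory Finset
open scoped ENNReal

namespace FrogAux



/-- guaranteed gain per successful round -/
def gain (n a : ℕ) : ℕ := max 1 (min a (n / 32) / 4)

def phi (n a : ℕ) : ℕ := a + gain n a

lemma one_le_gain (n a : ℕ) : 1 ≤ gain n a := le_max_left _ _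

lemma gain_mono (n : ℕ) : Monotone (gain n) := fun a b hab => by
  unfold gain
  exact max_le_max le_rfl (Nat.div_le_div_right (min_le_min_right _ hab))

lemma phi_mono (n : ℕ) : Monotone (phi n) := fun a b hab =>
  Nat.add_le_add hab (gain_mono n hab)

lemma lt_phi (n a : ℕ) : a < phi n a := by
  have := one_le_gain n a; unfold phi; omega

lemma le_iter_phi (n a j : ℕ) : a + j ≤ (phi n)^[j] a := by
  induction j with
  | zero => simp
  | succ j ih =>
    rw [Function.iterate_succ_apply']
    have := lt_phi n ((phi n)^[j] a)
    omega

lemma iter_phi_mono (n j : ℕ) : Monotone ((phi n)^[j]) := (phi_mono n).iterate j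

lemma iter_phi_ge_gain (n a j : ℕ) : a + j * gain n a ≤ (phi n)^[j] a := by
  induction j with
  | zero => simp
  | succ j ih =>
    rw [Function.iterate_succ_apply']
    have h1 : a ≤ (phi n)^[j] a := by have := le_iter_phi n a j; omega
    have h2 : gain n a ≤ gain n ((phi n)^[j] a) := gain_mono n h1
    have hphi : phi n ((phi n)^[j] a) = (phi n)^[j] a + gain n ((phi n)^[j] a) := rfl
    have hring : (j + 1) * gain n a = j * gain n a + gain n a := by ring
    omega

noncomputable section

/-- the level of `a` : number of `phi`-steps needed to reach half of `n`. -/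
def lvl (n a : ℕ) : ℕ := sInf {j | n ≤ 2 * (phi n)^[j] a}

lemma lvl_set_nonempty (n a : ℕ) : {j | n ≤ 2 * (phi n)^[j] a}.Nonempty := by
  refine ⟨n, ?_⟩
  have := le_iter_phi n a n
  simp only [Set.mem_setOf_eq]
  omega

lemma lvl_mem (n a : ℕ) : n ≤ 2 * (phi n)^[lvl n a] a :=
  Nat.sInf_mem (lvl_set_nonempty n a)

lemma lvl_anti (n : ℕ) {a b : ℕ} (hab : a ≤ b) : lvl n b ≤ lvl n a := by
  apply Nat.sInf_le
  have := lvl_mem n a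
  have := iter_phi_mono n (lvl n a) hab
  simp only [Set.mem_setOf_eq]
  omega

lemma lvl_eq_zero (n a : ℕ) (h : n ≤ 2 * a) : lvl n a = 0 := by
  have : 0 ∈ {j | n ≤ 2 * (phi n)^[j] a} := by simpa using h
  exact Nat.le_zero.mp (Nat.sInf_le this)

lemma lvl_pos (n a : ℕ) (h : 2 * a < n) : 1 ≤ lvl n a := by
  by_contra hc
  have h0 : lvl n a = 0 := by omega
  have := lvl_mem n a
  rw [h0] at this
  simp at this
  omega

lemma lvl_phi_lt (n a : ℕ) (h : 2 * a < n) : lvl n (phi n a) + 1 ≤ lvl n a := by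
  have h1 := lvl_pos n a h
  obtain ⟨j, hj⟩ : ∃ j, lvl n a = j + 1 := ⟨lvl n a - 1, by omega⟩
  have h2 := lvl_mem n a
  rw [hj, Function.iterate_succ_apply] at h2
  have h3 : j ∈ {j | n ≤ 2 * (phi n)^[j] (phi n a)} := h2
  have h4 : lvl n (phi n a) ≤ j := Nat.sInf_le h3
  omega

lemma lvl_le_iter (n a j : ℕ) : lvl n a ≤ j + lvl n ((phi n)^[j] a) := by
  apply Nat.sInf_le
  have := lvl_mem n ((phi n)^[j] a)
  simp only [Set.mem_setOf_eq]
  rw [← Function.iterate_add_apply] at this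
  simpa [Nat.add_comm] using this

lemma lvl_le_of_gain (n a j : ℕ) (h : n ≤ 2 * (a + j * gain n a)) : lvl n a ≤ j := by
  apply Nat.sInf_le
  have := iter_phi_ge_gain n a j
  simp only [Set.mem_setOf_eq]
  omega

/-- end-game bound: if `a` is already a decent fraction of `n`. -/
lemma lvl_big (n a : ℕ) (h1 : 1 ≤ a) (h2 : n < 32 * a) : lvl n a ≤ 2047 := by
  by_cases hbig : 2048 ≤ n
  · -- gain n a ≥ n/128
    have hm : min a (n / 32) = n / 32 := min_eq_right (by omega)
    have hg : n / 128 ≤ gain n a := by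
      unfold gain
      rw [hm]
      have : n / 32 / 4 = n / 128 := by
        rw [Nat.div_div_eq_div_mul]
      rw [this]
      exact le_max_right _ _
    apply lvl_le_of_gain
    have := Nat.mul_le_mul_left 2047 hg
    omega
  · -- n small : gain ≥ 1 suffices
    apply lvl_le_of_gain
    have hg := one_le_gain n a
    have : 2047 * 1 ≤ 2047 * gain n a := Nat.mul_le_mul_left _ hg
    omega

lemma lvl_double (n a : ℕ) (h1 : 1 ≤ a) (h2 : 32 * a ≤ n) :
    lvl n a ≤ 8 + lvl n (2 * a) := by
  have h8 : 2 * a ≤ (phi n)^[8] a := by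
    have hmin : min a (n / 32) = a := min_eq_left (by
      rw [Nat.le_div_iff_mul_le (by norm_num : 0 < 32)]; omega)
    have hg : a ≤ 8 * gain n a := by
      unfold gain
      rw [hmin]
      rcases le_or_gt a 8 with h | h
      · have : 1 ≤ max 1 (a/4) := le_max_left _ _
        omega
      · have h4 : a / 4 ≤ max 1 (a / 4) := le_max_right _ _
        have : 4 * (a / 4) + 3 ≥ a := by omega
        omega
    have := iter_phi_ge_gain n a 8
    omega
  calc lvl n a ≤ 8 + lvl n ((phi n)^[8] a) := lvl_le_iter n a 8
  _ ≤ 8 + lvl n (2 * a) := by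
      have := lvl_anti n h8
      omega

lemma lvl_le_log (n : ℕ) (hn : 2 ≤ n) : lvl n 1 ≤ 8 * Nat.log 2 n + 2055 := by
  set K := Nat.log 2 n + 1 with hK
  have hpow : n < 2 ^ K := Nat.lt_pow_succ_log_self (by norm_num) n
  have main : ∀ i, i ≤ K → ∀ a, 1 ≤ a → 2 ^ (K - i) ≤ a → lvl n a ≤ 8 * i + 2047 := by
    intro i
    induction i with
    | zero =>
      intro _ a h1 h2
      simp only [Nat.sub_zero] at h2
      have : n ≤ 2 * a := by omega
      simp [lvl_eq_zero n a this]
    | succ i ih =>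
      intro hiK a h1 h2
      rcases le_or_gt n (2 * a) with h | h
      · simp [lvl_eq_zero n a h]
      rcases Nat.lt_or_ge n (32 * a) with h32 | h32
      · have := lvl_big n a h1 h32; omega
      · have hd := lvl_double n a h1 h32
        have h2a : 2 ^ (K - i) ≤ 2 * a := by
          have hKi : K - i = (K - (i+1)) + 1 := by omega
          rw [hKi, pow_succ]
          omega
        have := ih (by omega) (2 * a) (by omega) h2a
        omega
  have := main K le_rfl 1 le_rfl (by simp)
  omega

end



/-- CDF-type majorant: `Q t j` bounds the probability of at most `j` successes
in `t` rounds, with per-round success probability `1/6`. -/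
noncomputable def Q : ℕ → ℕ → ℝ≥0∞
  | 0, _ => 1
  | (t+1), 0 => (5/6) * Q t 0
  | (t+1), (j+1) => (1/6) * Q t j + (5/6) * Q t (j+1)

lemma Q_zero (j : ℕ) : Q 0 j = 1 := rfl

lemma Q_succ_zero (t : ℕ) : Q (t+1) 0 = (5/6) * Q t 0 := rfl

lemma Q_succ_succ (t j : ℕ) : Q (t+1) (j+1) = (1/6) * Q t j + (5/6) * Q t (j+1) := rfl

private lemma c16 : (1/6 : ℝ≥0∞) * 6 = 1 := ENNReal.div_mul_cancel (by norm_num) (by norm_num)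
private lemma c56 : (5/6 : ℝ≥0∞) * 6 = 5 := by
  rw [div_eq_mul_inv, mul_assoc, ENNReal.inv_mul_cancel (by norm_num) (by norm_num), mul_one]

private lemma h16 (x : ℝ≥0∞) : (1/6) * (6 * x) = x := by
  rw [← mul_assoc, c16, one_mul]
private lemma h56 (x : ℝ≥0∞) : (5/6) * (6 * x) = 5 * x := by
  rw [← mul_assoc, c56]

lemma Q_sum_le (j : ℕ) : ∀ N : ℕ, ∑ t ∈ range N, Q t j ≤ 6 * ((j : ℝ≥0∞) + 1) := by
  induction j with
  | zero =>
    intro N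
    induction N with
    | zero => simp
    | succ N ihN =>
      rw [Finset.sum_range_succ']
      simp only [Q_succ_zero, Q_zero, ← Finset.mul_sum]
      calc (5/6 : ℝ≥0∞) * (∑ t ∈ range N, Q t 0) + 1
          ≤ (5/6) * (6 * (((0:ℕ):ℝ≥0∞) + 1)) + 1 := by
            gcongr
        _ ≤ 6 * (((0:ℕ):ℝ≥0∞) + 1) := by rw [h56]; norm_num
  | succ j ihj =>
    intro N
    induction N with
    | zero => simp
    | succ N ihN =>
      rw [Finset.sum_range_succ']
      simp only [Q_succ_succ, Q_zero]
      rw [Finset.sum_add_distrib, ← Finset.mul_sum, ← Finset.mul_sum]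
      calc (1/6 : ℝ≥0∞) * (∑ t ∈ range N, Q t j) + (5/6) * (∑ t ∈ range N, Q t (j+1)) + 1
          ≤ (1/6) * (6 * ((j:ℝ≥0∞)+1)) + (5/6) * (6 * (((j:ℝ≥0∞)+1)+1)) + 1 := by
            gcongr
            · exact ihj N
            · have := ihN; push_cast at this ⊢; exact this
        _ = ((j:ℝ≥0∞)+1) + 5 * (((j:ℝ≥0∞)+1)+1) + 1 := by rw [h16, h56]
        _ = 6 * (((j:ℕ):ℝ≥0∞) + 1 + 1) := by ring
        _ = 6 * (((j+1 : ℕ):ℝ≥0∞) + 1) := by push_cast; ring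

lemma Q_tsum_le (j : ℕ) : ∑' t, Q t j ≤ 6 * ((j : ℝ≥0∞) + 1) := by
  rw [ENNReal.tsum_eq_iSup_sum]
  refine iSup_le fun s => le_trans (Finset.sum_le_sum_of_subset ?_)
    (Q_sum_le j (if h : s.Nonempty then (s.max' h).succ else 0))
  intro x hx
  simp only [Finset.mem_range]
  split
  case isTrue hs => exact Nat.lt_succ_of_le (Finset.le_max' _ _ hx)
  case isFalse hs => exact absurd ⟨x, hx⟩ hs





lemma ennreal_frac_le {x b c d : ℕ} (hc : c ≠ 0) (hd : d ≠ 0) (h : c * x ≤ b * d) :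
    (x : ℝ≥0∞) * ((d : ℝ≥0∞))⁻¹ ≤ (b : ℝ≥0∞) / (c : ℝ≥0∞) := by
  rw [← div_eq_mul_inv, ENNReal.div_le_iff_le_mul (Or.inl (by exact_mod_cast hd))
    (Or.inl (ENNReal.natCast_ne_top d))]
  rw [show (b : ℝ≥0∞) / c * d = (b * d : ℝ≥0∞) / c by
    rw [div_eq_mul_inv, div_eq_mul_inv, mul_right_comm]]
  rw [ENNReal.le_div_iff_mul_le (Or.inl (by exact_mod_cast hc))
    (Or.inl (ENNReal.natCast_ne_top c))]
  rw [mul_comm]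
  exact_mod_cast h

lemma measure_mem_finset {n : ℕ} {Ω : Type} [MeasurableSpace Ω] {μ : Measure Ω}
    (Z : Ω → Fin n) (hZ : Measurable Z)
    (hZu : ∀ x, μ {ω | Z ω = x} = (n : ℝ≥0∞)⁻¹) (S : Finset (Fin n)) :
    μ {ω | Z ω ∈ S} = S.card * (n : ℝ≥0∞)⁻¹ := by
  have hset : {ω | Z ω ∈ S} = ⋃ x ∈ S, Z ⁻¹' {x} := by
    ext ω; simp
  rw [hset, measure_biUnion_finset ?_ (fun x _ => hZ (measurableSet_singleton x))]
  · have hterm : ∀ x ∈ S, μ (Z ⁻¹' {x}) = (n : ℝ≥0∞)⁻¹ := fun x _ => hZu x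
    rw [Finset.sum_congr rfl hterm]
    simp [Finset.sum_const, nsmul_eq_mul]
  · intro x _ y _ hxy
    refine Set.disjoint_left.mpr fun ω hx hy => hxy ?_
    simp only [Set.mem_preimage, Set.mem_singleton_iff] at hx hy
    rw [← hx, ← hy]

lemma measure_eq_pair {n : ℕ} (hn : 2 ≤ n) {Ω : Type} [MeasurableSpace Ω] {μ : Measure Ω}
    (Z W : Ω → Fin n) (hZ : Measurable Z) (hW : Measurable W)
    (hZu : ∀ x, μ {ω | Z ω = x} = (n : ℝ≥0∞)⁻¹)
    (hWu : ∀ x, μ {ω | W ω = x} = (n : ℝ≥0∞)⁻¹)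
    (hind : IndepFun Z W μ) :
    μ {ω | Z ω = W ω} = (n : ℝ≥0∞)⁻¹ := by
  have hn0 : (n : ℝ≥0∞) ≠ 0 := by exact_mod_cast (by omega : n ≠ 0)
  have hnT : (n : ℝ≥0∞) ≠ ⊤ := ENNReal.natCast_ne_top n
  have hset : {ω | Z ω = W ω} = ⋃ x ∈ (Finset.univ : Finset (Fin n)), (Z ⁻¹' {x} ∩ W ⁻¹' {x}) := by
    ext ω
    simp only [Set.mem_setOf_eq, Set.mem_iUnion, Set.mem_inter_iff, Set.mem_preimage,
      Set.mem_singleton_iff, Finset.mem_coe, Finset.mem_univ, exists_true_left, true_and]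
    constructor
    · intro h; exact ⟨Z ω, ⟨rfl, h.symm⟩⟩
    · rintro ⟨x, hx, hy⟩; rw [hx, hy]
  rw [hset, measure_biUnion_finset ?_ (fun x _ =>
      (hZ (measurableSet_singleton x)).inter (hW (measurableSet_singleton x)))]
  · have hterm : ∀ x : Fin n, μ (Z ⁻¹' {x} ∩ W ⁻¹' {x}) = (n : ℝ≥0∞)⁻¹ * (n : ℝ≥0∞)⁻¹ := by
      intro x
      rw [hind.measure_inter_preimage_eq_mul _ _ (measurableSet_singleton x)
        (measurableSet_singleton x)]
      have h1 : Z ⁻¹' {x} = {ω | Z ω = x} := rfl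
      have h2 : W ⁻¹' {x} = {ω | W ω = x} := rfl
      rw [h1, h2, hZu x, hWu x]
    rw [Finset.sum_congr rfl fun x _ => hterm x]
    rw [Finset.sum_const, Finset.card_univ, Fintype.card_fin, nsmul_eq_mul, ← mul_assoc,
      ENNReal.mul_inv_cancel hn0 hnT, one_mul]
  · intro x _ y _ hxy
    refine Set.disjoint_left.mpr fun ω hx hy => hxy ?_
    simp only [Set.mem_inter_iff, Set.mem_preimage, Set.mem_singleton_iff] at hx hy
    rw [← hx.1, ← hy.1]

lemma one_step {n : ℕ} (hn : 2 ≤ n) {Ω : Type} [MeasurableSpace Ω] {μ : Measure Ω}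
    [IsProbabilityMeasure μ]
    (Y : ℕ → Ω → Fin n) (hYm : ∀ i, Measurable (Y i))
    (hYu : ∀ i x, μ {ω | Y i ω = x} = (n : ℝ≥0∞)⁻¹)
    (hYp : ∀ i j, i ≠ j → IndepFun (Y i) (Y j) μ)
    (S : Finset (Fin n)) (h1 : 1 ≤ S.card) (h2 : 2 * S.card < n) :
    μ {ω | (S ∪ (range S.card).image (fun i => Y i ω)).card < phi n S.card} ≤ 5 / 6 := by
  classical
  set a := S.card with ha
  set k := min a (n / 32) with hk
  rcases le_or_gt k 7 with hk7 | hk8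
  · -- few frogs : single-frog argument
    have hg : gain n a = 1 := by
      have : min a (n/32) / 4 ≤ 1 := by omega
      unfold gain
      omega
    have hsub : {ω | (S ∪ (range a).image (fun i => Y i ω)).card < phi n a}
        ⊆ {ω | Y 0 ω ∈ S} := by
      intro ω hω
      simp only [Set.mem_setOf_eq] at hω ⊢
      by_contra hY0
      have hmem : Y 0 ω ∈ (range a).image (fun i => Y i ω) :=
        Finset.mem_image.mpr ⟨0, Finset.mem_range.mpr (by omega), rfl⟩
      have hins : insert (Y 0 ω) S ⊆ S ∪ (range a).image (fun i => Y i ω) :=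
        Finset.insert_subset (Finset.mem_union_right _ hmem) Finset.subset_union_left
      have hcard := Finset.card_le_card hins
      rw [Finset.card_insert_of_notMem hY0] at hcard
      unfold phi at hω
      omega
    calc μ {ω | (S ∪ (range a).image (fun i => Y i ω)).card < phi n a}
        ≤ μ {ω | Y 0 ω ∈ S} := measure_mono hsub
      _ = a * (n : ℝ≥0∞)⁻¹ := measure_mem_finset (Y 0) (hYm 0) (hYu 0) S
      _ ≤ (5 : ℝ≥0∞) / 6 := by
          have h6 : 6 * a ≤ 5 * n := by omega
          exact_mod_cast ennreal_frac_le (by norm_num) (by omega) h6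
  · -- many frogs : Markov on the number of wasted frogs
    set m := k with hm
    have hm8 : 8 ≤ m := hk8
    have hma : m ≤ a := min_le_left _ _
    have hm32 : 32 * m ≤ n := by
      have : m ≤ n / 32 := min_le_right _ _
      omega
    have hg : gain n a = m / 4 := by
      unfold gain
      omega
    set g := m / 4 with hgdef
    -- bad events
    set Bad : ℕ → Set Ω := fun i => {ω | Y i ω ∈ S ∨ ∃ j ∈ range i, Y i ω = Y j ω} with hBad
    have hBadmeas : ∀ i, MeasurableSet (Bad i) := by
      intro i
      have : Bad i = {ω | Y i ω ∈ S} ∪ ⋃ j ∈ range i, {ω | Y i ω = Y j ω} := by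
        ext ω; simp [hBad]
      rw [this]
      refine MeasurableSet.union ?_ (MeasurableSet.biUnion (range i).countable_toSet fun j _ => ?_)
      · have : {ω | Y i ω ∈ S} = ⋃ x ∈ S, Y i ⁻¹' {x} := by ext ω; simp
        rw [this]
        exact MeasurableSet.biUnion S.countable_toSet fun x _ =>
          (hYm i) (measurableSet_singleton x)
      · have : {ω | Y i ω = Y j ω} = ⋃ x : Fin n, (Y i ⁻¹' {x} ∩ Y j ⁻¹' {x}) := by
          ext ω
          simp only [Set.mem_setOf_eq, Set.mem_iUnion, Set.mem_inter_iff, Set.mem_preimage,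
            Set.mem_singleton_iff]
          constructor
          · intro h; exact ⟨Y i ω, rfl, h.symm⟩
          · rintro ⟨x, hx, hy⟩; rw [hx, hy]
        rw [this]
        exact MeasurableSet.iUnion fun x =>
          ((hYm i) (measurableSet_singleton x)).inter ((hYm j) (measurableSet_singleton x))
    have hBadμ : ∀ i, μ (Bad i) ≤ ((a : ℝ≥0∞) + i) * (n : ℝ≥0∞)⁻¹ := by
      intro i
      have hsplit : Bad i ⊆ {ω | Y i ω ∈ S} ∪ ⋃ j ∈ range i, {ω | Y i ω = Y j ω} := by
        intro ω hω; simp only [hBad, Set.mem_setOf_eq] at hω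
        rcases hω with h | ⟨j, hj, h⟩
        · exact Or.inl h
        · exact Or.inr (Set.mem_biUnion hj h)
      calc μ (Bad i) ≤ μ ({ω | Y i ω ∈ S} ∪ ⋃ j ∈ range i, {ω | Y i ω = Y j ω}) :=
            measure_mono hsplit
        _ ≤ μ {ω | Y i ω ∈ S} + μ (⋃ j ∈ range i, {ω | Y i ω = Y j ω}) := measure_union_le _ _
        _ ≤ a * (n : ℝ≥0∞)⁻¹ + ∑ j ∈ range i, μ {ω | Y i ω = Y j ω} := by
            gcongr
            · exact le_of_eq (measure_mem_finset (Y i) (hYm i) (hYu i) S)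
            · exact measure_biUnion_finset_le _ _
        _ ≤ a * (n : ℝ≥0∞)⁻¹ + ∑ j ∈ range i, (n : ℝ≥0∞)⁻¹ := by
            gcongr with j hj
            rw [measure_eq_pair hn (Y i) (Y j) (hYm i) (hYm j) (hYu i) (hYu j)
              (hYp i j (by simp at hj; omega))]
        _ = ((a : ℝ≥0∞) + i) * (n : ℝ≥0∞)⁻¹ := by
            rw [Finset.sum_const, Finset.card_range, nsmul_eq_mul, add_mul]
    -- the counting function
    set f : Ω → ℝ≥0∞ := fun ω => ∑ i ∈ range m, (Bad i).indicator (fun _ => 1) ω with hfdef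
    have hf : Measurable f :=
      Finset.measurable_sum _ (fun i _ => measurable_const.indicator (hBadmeas i))
    have hint : ∫⁻ ω, f ω ∂μ = ∑ i ∈ range m, μ (Bad i) := by
      rw [hfdef]
      rw [lintegral_finset_sum _ (fun i _ => measurable_const.indicator (hBadmeas i))]
      exact Finset.sum_congr rfl fun i _ => by
        rw [lintegral_indicator_const (hBadmeas i), one_mul]
    set r := m - m / 4 + 1 with hrdef
    have hcard : ∀ ω, f ω = (((range m).filter (fun i => ω ∈ Bad i)).card : ℝ≥0∞) := by
      intro ω
      rw [Finset.card_filter, Nat.cast_sum, hfdef]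
      refine Finset.sum_congr rfl fun i _ => ?_
      rw [Set.indicator_apply]
      by_cases h : ω ∈ Bad i <;> simp [h]
    have hsub : {ω | (S ∪ (range a).image (fun i => Y i ω)).card < phi n a}
        ⊆ {ω | (r : ℝ≥0∞) ≤ f ω} := by
      intro ω hω
      simp only [Set.mem_setOf_eq] at hω ⊢
      rw [hcard ω, Nat.cast_le]
      by_contra hW
      push_neg at hW
      set W := ((range m).filter (fun i => ω ∈ Bad i)).card with hWdef
      have hWr : W ≤ m - m / 4 := by omega
      set Fr := (range m).filter (fun i => ω ∉ Bad i) with hFrdef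
      have hFr : W + Fr.card = m := by
        have := Finset.card_filter_add_card_filter_not
          (s := range m) (p := fun i => ω ∈ Bad i)
        rw [Finset.card_range] at this
        exact this
      have hfresh : ∀ i ∈ Fr, Y i ω ∉ S ∧ ∀ j < i, Y i ω ≠ Y j ω := by
        intro i hi
        rw [hFrdef, Finset.mem_filter] at hi
        have := hi.2
        simp only [hBad, Set.mem_setOf_eq, not_or, not_exists] at this
        refine ⟨this.1, fun j hj => ?_⟩
        have := this.2 j
        simp only [Finset.mem_range] at this
        intro heq
        exact (this (by simpa using And.intro hj heq)).elim
      have hinj : Set.InjOn (fun i => Y i ω) ↑Fr := by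
        intro i hi j hj heq
        by_contra hne
        rcases Nat.lt_or_ge i j with hlt | hge
        · exact (hfresh j hj).2 i hlt heq.symm
        · exact (hfresh i hi).2 j (by omega) heq
      have himg : Fr.image (fun i => Y i ω) ⊆ ((range a).image (fun i => Y i ω)) \ S := by
        intro x hx
        obtain ⟨i, hi, hYi⟩ := Finset.mem_image.mp hx
        rw [Finset.mem_sdiff]
        constructor
        · refine Finset.mem_image.mpr ⟨i, ?_, hYi⟩
          rw [hFrdef, Finset.mem_filter, Finset.mem_range] at hi
          exact Finset.mem_range.mpr (by omega)
        · rw [← hYi]; exact (hfresh i hi).1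
      have hcard2 : m - W ≤ (((range a).image (fun i => Y i ω)) \ S).card := by
        calc m - W = Fr.card := by omega
          _ = (Fr.image (fun i => Y i ω)).card := (Finset.card_image_of_injOn hinj).symm
          _ ≤ _ := Finset.card_le_card himg
      have hutot := Finset.card_sdiff_add_card ((range a).image (fun i => Y i ω)) S
      rw [Finset.union_comm] at hutot
      unfold phi at hω
      rw [hg] at hω
      omega
    -- Markov
    have hM := mul_meas_ge_le_lintegral (μ := μ) hf (r : ℝ≥0∞)
    have hsum : ∫⁻ ω, f ω ∂μ ≤ ((m * (a + m) : ℕ) : ℝ≥0∞) * (n : ℝ≥0∞)⁻¹ := by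
      rw [hint]
      calc ∑ i ∈ range m, μ (Bad i) ≤ ∑ i ∈ range m, ((a : ℝ≥0∞) + m) * (n : ℝ≥0∞)⁻¹ := by
            refine Finset.sum_le_sum fun i hi => le_trans (hBadμ i) ?_
            gcongr
            exact_mod_cast Nat.le_of_lt (Finset.mem_range.mp hi)
        _ = ((m * (a + m) : ℕ) : ℝ≥0∞) * (n : ℝ≥0∞)⁻¹ := by
            rw [Finset.sum_const, Finset.card_range, nsmul_eq_mul]
            push_cast
            ring
    have hnat : 6 * (m * (a + m)) ≤ (5 * r) * n := by
      have p1 : m * (2 * a + 1) ≤ m * n := Nat.mul_le_mul_left m (by omega)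
      have p2 : 32 * (m * m) ≤ m * n := by
        calc 32 * (m * m) = m * (32 * m) := by ring
          _ ≤ m * n := Nat.mul_le_mul_left m hm32
      have p3 : 3 * (m * n) + 4 * n ≤ 4 * (r * n) := by
        have h34 : 3 * m + 4 ≤ 4 * r := by omega
        calc 3 * (m * n) + 4 * n = (3 * m + 4) * n := by ring
          _ ≤ (4 * r) * n := Nat.mul_le_mul_right n h34
          _ = 4 * (r * n) := by ring
      nlinarith [p1, p2, p3]
    have hfrac : ((m * (a + m) : ℕ) : ℝ≥0∞) * (n : ℝ≥0∞)⁻¹ ≤ (5 / 6 : ℝ≥0∞) * r := by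
      have := ennreal_frac_le (x := m * (a + m)) (b := 5 * r) (c := 6) (d := n)
        (by norm_num) (by omega) hnat
      calc ((m * (a + m) : ℕ) : ℝ≥0∞) * (n : ℝ≥0∞)⁻¹ ≤ ((5 * r : ℕ) : ℝ≥0∞) / 6 := this
        _ = (5 / 6 : ℝ≥0∞) * r := by
            push_cast
            rw [div_eq_mul_inv, div_eq_mul_inv]
            ring
    have hr0 : (r : ℝ≥0∞) ≠ 0 := by exact_mod_cast (by omega : r ≠ 0)
    have hrT : (r : ℝ≥0∞) ≠ ⊤ := ENNReal.natCast_ne_top r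
    have hfinal : (r : ℝ≥0∞) * μ {ω | (S ∪ (range a).image (fun i => Y i ω)).card < phi n a}
        ≤ (r : ℝ≥0∞) * (5 / 6) := by
      calc (r : ℝ≥0∞) * μ {ω | (S ∪ (range a).image (fun i => Y i ω)).card < phi n a}
          ≤ (r : ℝ≥0∞) * μ {ω | (r : ℝ≥0∞) ≤ f ω} :=
            mul_le_mul_right (measure_mono hsub) _
        _ ≤ ∫⁻ ω, f ω ∂μ := hM
        _ ≤ ((m * (a + m) : ℕ) : ℝ≥0∞) * (n : ℝ≥0∞)⁻¹ := hsum
        _ ≤ (5 / 6 : ℝ≥0∞) * r := hfrac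
        _ = (r : ℝ≥0∞) * (5 / 6) := mul_comm _ _
    exact (ENNReal.mul_le_mul_iff_right hr0 hrT).mp hfinal





/-- saturated sets w.r.t. a measurable map into a countable discrete space -/
lemma sat_eq {Ω γ : Type*} {V : Ω → γ} {B : Set Ω}
    (h : ∀ ω ω', V ω = V ω' → ω ∈ B → ω' ∈ B) : B = V ⁻¹' (V '' B) :=
  subset_antisymm (Set.subset_preimage_image V B)
    (fun ω' hω' => by obtain ⟨ω, hB, hE⟩ := hω'; exact h ω ω' hE hB)

lemma sat_meas {Ω γ : Type*} [MeasurableSpace Ω] [Countable γ] [MeasurableSpace γ]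
    [MeasurableSingletonClass γ] {V : Ω → γ} (hV : Measurable V) {B : Set Ω}
    (h : ∀ ω ω', V ω = V ω' → ω ∈ B → ω' ∈ B) : MeasurableSet B := by
  rw [sat_eq h]
  exact hV (V '' B).to_countable.measurableSet

structure Setup (n : ℕ) (Ω : Type) [MeasurableSpace Ω] (μ : Measure Ω) where
  hn : 2 ≤ n
  X : ℕ → ℕ → Ω → Fin n
  A : ℕ → Ω → Finset (Fin n)
  hXmeas : ∀ t i, Measurable (X t i)
  hXunif : ∀ t i x, μ {ω | X t i ω = x} = (n : ℝ≥0∞)⁻¹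
  hindep : iIndepFun (fun p : ℕ × ℕ => X p.1 p.2) μ
  hA0 : ∀ ω ω', A 0 ω = A 0 ω'
  hA0card : ∀ ω, (A 0 ω).card = 1
  hAsucc : ∀ t ω, A (t + 1) ω = A t ω ∪ (Finset.range (A t ω).card).image (fun i => X t i ω)

namespace Setup

variable {n : ℕ} {Ω : Type} [MeasurableSpace Ω] {μ : Measure Ω} (F : Setup n Ω μ)

lemma card_le (t : ℕ) (ω : Ω) : (F.A t ω).card ≤ n := by
  have := Finset.card_le_univ (F.A t ω)
  simpa using this

lemma A_mono (t : ℕ) (ω : Ω) : F.A t ω ⊆ F.A (t + 1) ω := by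
  rw [F.hAsucc]; exact Finset.subset_union_left

lemma card_mono (t : ℕ) (ω : Ω) : (F.A t ω).card ≤ (F.A (t + 1) ω).card :=
  Finset.card_le_card (F.A_mono t ω)

lemma card_pos (t : ℕ) (ω : Ω) : 1 ≤ (F.A t ω).card := by
  induction t with
  | zero => rw [F.hA0card]
  | succ t ih => exact le_trans ih (F.card_mono t ω)

lemma A_det (t : ℕ) (ω ω' : Ω) (h : ∀ s < t, ∀ i < n, F.X s i ω = F.X s i ω') :
    F.A t ω = F.A t ω' := by
  induction t with
  | zero => exact F.hA0 ω ω'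
  | succ t ih =>
    have hA : F.A t ω = F.A t ω' := ih (fun s hs i hi => h s (by omega) i hi)
    rw [F.hAsucc, F.hAsucc, hA]
    congr 1
    refine Finset.image_congr fun i hi => ?_
    simp only [Finset.coe_range, Set.mem_Iio] at hi
    exact h t (by omega) i (by have := F.card_le t ω'; omega)

/-- success at round `t` : either the process already reached half of `n`,
or the number of awake frogs grew by the guaranteed amount. -/
def succ (t : ℕ) (ω : Ω) : Prop :=
  phi n ((F.A t ω).card) ≤ (F.A (t + 1) ω).card ∨ n ≤ 2 * (F.A t ω).card

open scoped Classical in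
/-- number of successes among the first `t` rounds -/
noncomputable def Scnt (t : ℕ) (ω : Ω) : ℕ :=
  ((range t).filter (fun s => F.succ s ω)).card

open scoped Classical in
lemma Scnt_succ (t : ℕ) (ω : Ω) :
    F.Scnt (t + 1) ω = F.Scnt t ω + if F.succ t ω then 1 else 0 := by
  unfold Scnt
  rw [Finset.range_add_one, Finset.filter_insert]
  split
  · rw [Finset.card_insert_of_notMem (by simp)]
  · simp

lemma succ_det (t : ℕ) (ω ω' : Ω) (h : ∀ s ≤ t, ∀ i < n, F.X s i ω = F.X s i ω') :
    F.succ t ω ↔ F.succ t ω' := by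
  have h1 : F.A t ω = F.A t ω' := F.A_det t ω ω' (fun s hs i hi => h s (by omega) i hi)
  have h2 : F.A (t+1) ω = F.A (t+1) ω' := F.A_det (t+1) ω ω' (fun s hs i hi => h s (by omega) i hi)
  unfold succ
  rw [h1, h2]

open scoped Classical in
lemma Scnt_det (t : ℕ) (ω ω' : Ω) (h : ∀ s < t, ∀ i < n, F.X s i ω = F.X s i ω') :
    F.Scnt t ω = F.Scnt t ω' := by
  unfold Scnt
  congr 1
  refine Finset.filter_congr fun s hs => ?_
  simp only [Finset.mem_range] at hs
  exact F.succ_det s ω ω' (fun s' hs' i hi => h s' (by omega) i hi)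

/-- the bundled vector of jump variables indexed by a finite set of (time, frog) pairs -/
def vec (T : Finset (ℕ × ℕ)) : Ω → (↥T → Fin n) :=
  fun ω (p : ↥T) => (fun q : ℕ × ℕ => F.X q.1 q.2) ↑p ω

lemma vec_meas (T : Finset (ℕ × ℕ)) : Measurable (F.vec T) :=
  measurable_pi_lambda _ fun p => F.hXmeas _ _

lemma vec_eq_imp (T : Finset (ℕ × ℕ)) {ω ω' : Ω} (h : F.vec T ω = F.vec T ω')
    {s i : ℕ} (hm : (s, i) ∈ T) : F.X s i ω = F.X s i ω' :=
  congrFun h ⟨(s, i), hm⟩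

lemma meas_A_eq (t : ℕ) (S : Finset (Fin n)) : MeasurableSet {ω | F.A t ω = S} := by
  refine sat_meas (F.vec_meas (range t ×ˢ range n)) (fun ω ω' hV hω => ?_)
  simp only [Set.mem_setOf_eq] at hω ⊢
  rw [← hω]
  refine (F.A_det t ω ω' (fun s hs i hi => F.vec_eq_imp _ hV ?_)).symm
  simp [Finset.mem_product, hs, hi]

lemma meas_halved (t : ℕ) : MeasurableSet {ω | n ≤ 2 * (F.A t ω).card} := by
  refine sat_meas (F.vec_meas (range t ×ˢ range n)) (fun ω ω' hV hω => ?_)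
  simp only [Set.mem_setOf_eq] at hω ⊢
  rwa [← F.A_det t ω ω' (fun s hs i hi => F.vec_eq_imp _ hV (by simp [Finset.mem_product, hs, hi]))]

lemma meas_succ (t : ℕ) : MeasurableSet {ω | F.succ t ω} := by
  refine sat_meas (F.vec_meas (range (t+1) ×ˢ range n)) (fun ω ω' hV hω => ?_)
  simp only [Set.mem_setOf_eq] at hω ⊢
  rwa [← F.succ_det t ω ω' (fun s hs i hi => F.vec_eq_imp _ hV
    (by simp only [Finset.mem_product, Finset.mem_range]; omega))]

lemma meas_Scnt_eq (t j : ℕ) : MeasurableSet {ω | F.Scnt t ω = j} := by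
  refine sat_meas (F.vec_meas (range t ×ˢ range n)) (fun ω ω' hV hω => ?_)
  simp only [Set.mem_setOf_eq] at hω ⊢
  rwa [← F.Scnt_det t ω ω' (fun s hs i hi => F.vec_eq_imp _ hV
    (by simp [Finset.mem_product, hs, hi]))]

lemma meas_Scnt_le (t j : ℕ) : MeasurableSet {ω | F.Scnt t ω ≤ j} := by
  refine sat_meas (F.vec_meas (range t ×ˢ range n)) (fun ω ω' hV hω => ?_)
  simp only [Set.mem_setOf_eq] at hω ⊢
  rwa [← F.Scnt_det t ω ω' (fun s hs i hi => F.vec_eq_imp _ hV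
    (by simp [Finset.mem_product, hs, hi]))]

end Setup


namespace Setup

variable {n : ℕ} {Ω : Type} [MeasurableSpace Ω] {μ : Measure Ω}

lemma step_bound (F : Setup n Ω μ) [IsProbabilityMeasure μ] (t j : ℕ) :
    μ ({ω | F.Scnt t ω = j} ∩ {ω | ¬ F.succ t ω})
      ≤ (5 / 6) * μ {ω | F.Scnt t ω = j} := by
  classical
  set T1 := range t ×ˢ range n with hT1
  set T2 := ({t} : Finset ℕ) ×ˢ range n with hT2
  have hdisj : Disjoint T1 T2 := by
    rw [Finset.disjoint_left]
    intro p hp1 hp2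
    rw [hT1, Finset.mem_product, Finset.mem_range] at hp1
    rw [hT2, Finset.mem_product, Finset.mem_singleton] at hp2
    omega
  have hIF : IndepFun (F.vec T1) (F.vec T2) μ :=
    F.hindep.indepFun_finset T1 T2 hdisj (fun p => F.hXmeas p.1 p.2)
  set U := {ω | F.Scnt t ω = j} with hU
  have hUmeas : MeasurableSet U := F.meas_Scnt_eq t j
  have hNmeas : MeasurableSet {ω | ¬ F.succ t ω} := by
    have : {ω | ¬ F.succ t ω} = {ω | F.succ t ω}ᶜ := rfl
    rw [this]
    exact (F.meas_succ t).compl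
  have hpart : ∀ (W : Set Ω), MeasurableSet W →
      μ W = ∑ S : Finset (Fin n), μ (W ∩ {ω | F.A t ω = S}) := by
    intro W hW
    have hun : W = ⋃ S ∈ (Finset.univ : Finset (Finset (Fin n))),
        (W ∩ {ω | F.A t ω = S}) := by
      ext ω; simp
    conv_lhs => rw [hun]
    rw [measure_biUnion_finset]
    · intro S _ S' _ hSS'
      refine Set.disjoint_left.mpr fun ω h1 h2 => hSS' ?_
      rw [← h1.2, ← h2.2]
    · exact fun S _ => hW.inter (F.meas_A_eq t S)
  rw [hpart (U ∩ {ω | ¬ F.succ t ω}) (hUmeas.inter hNmeas), hpart U hUmeas,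
    Finset.mul_sum]
  refine Finset.sum_le_sum fun S _ => ?_
  rcases le_or_gt n (2 * S.card) with hhalf | hhalf
  · -- already reached half: success is automatic, the event is empty
    have hempty : U ∩ {ω | ¬ F.succ t ω} ∩ {ω | F.A t ω = S} = ∅ := by
      ext ω
      simp only [Set.mem_inter_iff, Set.mem_setOf_eq, Set.mem_empty_iff_false, iff_false,
        not_and, and_imp]
      intro _ hns hA
      exact (hns (Or.inr (by rw [hA]; exact hhalf))).elim
    rw [hempty]
    simp
  rcases Nat.eq_zero_or_pos S.card with h0 | hpos
  · have hempty : U ∩ {ω | ¬ F.succ t ω} ∩ {ω | F.A t ω = S} = ∅ := by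
      ext ω
      simp only [Set.mem_inter_iff, Set.mem_setOf_eq, Set.mem_empty_iff_false, iff_false,
        not_and, and_imp]
      intro _ _ hA
      have := F.card_pos t ω
      rw [hA] at this
      omega
    rw [hempty]
    simp
  · -- main case
    set E : Set Ω :=
      {ω | (S ∪ (range S.card).image (fun i => F.X t i ω)).card < phi n S.card} with hE
    set B : Set Ω := U ∩ {ω | F.A t ω = S} with hB
    have hScard : S.card ≤ n := by omega
    have hEsat : ∀ ω ω', F.vec T2 ω = F.vec T2 ω' → ω ∈ E → ω' ∈ E := by
      intro ω ω' hV hω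
      simp only [hE, Set.mem_setOf_eq] at hω ⊢
      have himg : (range S.card).image (fun i => F.X t i ω')
          = (range S.card).image (fun i => F.X t i ω) := by
        refine Finset.image_congr fun i hi => ?_
        simp only [Finset.coe_range, Set.mem_Iio] at hi
        exact (F.vec_eq_imp T2 hV (by
          rw [hT2, Finset.mem_product, Finset.mem_singleton, Finset.mem_range]
          exact ⟨rfl, by omega⟩)).symm
      rw [himg]
      exact hω
    have hBsat : ∀ ω ω', F.vec T1 ω = F.vec T1 ω' → ω ∈ B → ω' ∈ B := by
      intro ω ω' hV hω
      have hall : ∀ s < t, ∀ i < n, F.X s i ω = F.X s i ω' := by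
        intro s hs i hi
        exact F.vec_eq_imp T1 hV (by
          rw [hT1, Finset.mem_product, Finset.mem_range, Finset.mem_range]
          exact ⟨hs, hi⟩)
      simp only [hB, hU, Set.mem_inter_iff, Set.mem_setOf_eq] at hω ⊢
      rw [← F.Scnt_det t ω ω' hall, ← F.A_det t ω ω' hall]
      exact hω
    have hEeq : U ∩ {ω | ¬ F.succ t ω} ∩ {ω | F.A t ω = S} = B ∩ E := by
      rw [hB]
      ext ω
      simp only [Set.mem_inter_iff, Set.mem_setOf_eq, hE]
      constructor
      · rintro ⟨⟨hUω, hns⟩, hA⟩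
        refine ⟨⟨hUω, hA⟩, ?_⟩
        unfold Setup.succ at hns
        push_neg at hns
        have h1 := hns.1
        rw [hA] at h1
        rw [F.hAsucc t ω, hA] at h1
        omega
      · rintro ⟨⟨hUω, hA⟩, hEω⟩
        refine ⟨⟨hUω, ?_⟩, hA⟩
        unfold Setup.succ
        push_neg
        constructor
        · rw [hA, F.hAsucc t ω, hA]
          omega
        · rw [hA]
          omega
    have hEmeas : MeasurableSet (F.vec T2 '' E) := (F.vec T2 '' E).to_countable.measurableSet
    have hBmeas : MeasurableSet (F.vec T1 '' B) := (F.vec T1 '' B).to_countable.measurableSet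
    have hprod : μ (B ∩ E) = μ B * μ E := by
      rw [sat_eq hBsat, sat_eq hEsat]
      exact hIF.measure_inter_preimage_eq_mul _ _ hBmeas hEmeas
    have hEbound : μ E ≤ 5 / 6 := by
      refine one_step F.hn (F.X t) (fun i => F.hXmeas t i) (fun i x => F.hXunif t i x)
        (fun i i' hii' => F.hindep.indepFun
          (show ((t,i) : ℕ × ℕ) ≠ ((t,i') : ℕ × ℕ) from fun h => hii' (congrArg Prod.snd h)))
        S hpos hhalf
    calc μ (U ∩ {ω | ¬ F.succ t ω} ∩ {ω | F.A t ω = S}) = μ B * μ E := by rw [hEeq, hprod]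
      _ ≤ μ B * (5 / 6) := mul_le_mul_right hEbound _
      _ = (5 / 6) * μ (U ∩ {ω | F.A t ω = S}) := by rw [mul_comm, hB]

end Setup

namespace Setup

variable {n : ℕ} {Ω : Type} [MeasurableSpace Ω] {μ : Measure Ω}

lemma Scnt_le_Q (F : Setup n Ω μ) [IsProbabilityMeasure μ] :
    ∀ t j, μ {ω | F.Scnt t ω ≤ j} ≤ Q t j := by
  have honesix : ∀ x : ℝ≥0∞, (1/6) * x + (5/6) * x = x := by
    intro x
    rw [← add_mul, ENNReal.div_add_div_same]
    norm_num
    rw [ENNReal.div_self (by norm_num) (by norm_num), one_mul]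
  intro t
  induction t with
  | zero => intro j; rw [Q_zero]; exact prob_le_one
  | succ t ih =>
    intro j
    cases j with
    | zero =>
      have hset : {ω | F.Scnt (t+1) ω ≤ 0}
          = {ω | F.Scnt t ω = 0} ∩ {ω | ¬ F.succ t ω} := by
        ext ω
        simp only [Set.mem_setOf_eq, Set.mem_inter_iff]
        rw [F.Scnt_succ t ω]
        by_cases hs : F.succ t ω <;> simp [hs]
      rw [hset, Q_succ_zero]
      calc μ ({ω | F.Scnt t ω = 0} ∩ {ω | ¬ F.succ t ω})
          ≤ (5/6) * μ {ω | F.Scnt t ω = 0} := F.step_bound t 0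
        _ = (5/6) * μ {ω | F.Scnt t ω ≤ 0} := by
            have : {ω | F.Scnt t ω = 0} = {ω | F.Scnt t ω ≤ 0} := by
              ext ω; simp [Nat.le_zero]
            rw [this]
        _ ≤ (5/6) * Q t 0 := mul_le_mul_right (ih 0) _
    | succ j =>
      have hsub : {ω | F.Scnt (t+1) ω ≤ j+1}
          ⊆ {ω | F.Scnt t ω ≤ j}
            ∪ ({ω | F.Scnt t ω = j+1} ∩ {ω | ¬ F.succ t ω}) := by
        intro ω hω
        simp only [Set.mem_setOf_eq, Set.mem_union, Set.mem_inter_iff] at hω ⊢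
        rw [F.Scnt_succ t ω] at hω
        by_cases hs : F.succ t ω
        · simp only [hs, if_true] at hω
          left; omega
        · simp only [hs, if_false] at hω
          rcases Nat.lt_or_ge (F.Scnt t ω) (j+1) with h | h
          · left; omega
          · right; exact ⟨by omega, hs⟩
      have hunion : μ {ω | F.Scnt t ω ≤ j} + μ {ω | F.Scnt t ω = j+1}
          = μ {ω | F.Scnt t ω ≤ j+1} := by
        rw [← measure_union ?_ (F.meas_Scnt_eq t (j+1))]
        · congr 1
          ext ω
          simp only [Set.mem_union, Set.mem_setOf_eq]
          omega
        · refine Set.disjoint_left.mpr fun ω h1 h2 => ?_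
          simp only [Set.mem_setOf_eq] at h1 h2
          omega
      have hsplit : ∀ a b : ℝ≥0∞, (1/6) * a + (5/6) * (a + b) = a + (5/6) * b := by
        intro a b
        rw [mul_add, ← add_assoc, honesix a]
      calc μ {ω | F.Scnt (t+1) ω ≤ j+1}
          ≤ μ ({ω | F.Scnt t ω ≤ j}
              ∪ ({ω | F.Scnt t ω = j+1} ∩ {ω | ¬ F.succ t ω})) := measure_mono hsub
        _ ≤ μ {ω | F.Scnt t ω ≤ j}
              + μ ({ω | F.Scnt t ω = j+1} ∩ {ω | ¬ F.succ t ω}) := measure_union_le _ _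
        _ ≤ μ {ω | F.Scnt t ω ≤ j} + (5/6) * μ {ω | F.Scnt t ω = j+1} :=
            add_le_add le_rfl (F.step_bound t (j+1))
        _ = (1/6) * μ {ω | F.Scnt t ω ≤ j}
              + (5/6) * (μ {ω | F.Scnt t ω ≤ j} + μ {ω | F.Scnt t ω = j+1}) :=
            (hsplit _ _).symm
        _ = (1/6) * μ {ω | F.Scnt t ω ≤ j} + (5/6) * μ {ω | F.Scnt t ω ≤ j+1} := by
            rw [hunion]
        _ ≤ (1/6) * Q t j + (5/6) * Q t (j+1) := by
            gcongr
            · exact ih j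
            · exact ih (j+1)
        _ = Q (t+1) (j+1) := (Q_succ_succ t j).symm

lemma lvl_plus_Scnt (F : Setup n Ω μ) (ω : Ω) :
    ∀ t, (∀ s ≤ t, 2 * (F.A s ω).card < n) →
      lvl n ((F.A t ω).card) + F.Scnt t ω ≤ lvl n 1 := by
  intro t
  induction t with
  | zero =>
    intro _
    have h1 : (F.A 0 ω).card = 1 := F.hA0card ω
    have h2 : F.Scnt 0 ω = 0 := by
      unfold Setup.Scnt
      simp
    rw [h1, h2]
    omega
  | succ t ih =>
    intro h
    have hIH := ih (fun s hs => h s (by omega))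
    have hcard := F.card_mono t ω
    have hhalf : 2 * (F.A t ω).card < n := h t (by omega)
    rw [F.Scnt_succ t ω]
    by_cases hs : F.succ t ω
    · have hgrow : phi n ((F.A t ω).card) ≤ (F.A (t+1) ω).card := by
        rcases hs with h1 | h2
        · exact h1
        · omega
      have hl1 : lvl n ((F.A (t+1) ω).card) ≤ lvl n (phi n ((F.A t ω).card)) :=
        lvl_anti n hgrow
      have hl2 := lvl_phi_lt n ((F.A t ω).card) hhalf
      simp only [hs, if_true]
      omega
    · have hl1 : lvl n ((F.A (t+1) ω).card) ≤ lvl n ((F.A t ω).card) := lvl_anti n hcard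
      simp only [hs, if_false]
      omega

end Setup

end FrogAux

/-- There exists a constant `C > 0` such that for every `n ≥ 2`, in the
frog model on the complete graph with self-loops on `n` vertices, the expected time to
wake at least half of the frogs satisfies `E[τ] ≤ C * log n`, where
`τ = inf {t | 2 * |A t| ≥ n}`. -/
theorem frog_model_half_wakeup_time_log_upper_bound :
    ∃ C : ℝ, 0 < C ∧
      ∀ (n : ℕ) (hn : 2 ≤ n) (Ω : Type) (_ : MeasurableSpace Ω) (μ : Measure Ω),
        IsProbabilityMeasure μ →
        ∀ (X : ℕ → ℕ → Ω → Fin n) (A : ℕ → Ω → Finset (Fin n)) (τ : Ω → ℕ),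
          (∀ t i, Measurable (X t i)) →
          (∀ t i x, μ {ω | X t i ω = x} = (n : ℝ≥0∞)⁻¹) →
          iIndepFun (fun p : ℕ × ℕ => X p.1 p.2) μ →
          (∀ ω, A 0 ω = {⟨0, by omega⟩}) →
          (∀ t ω, A (t + 1) ω
              = A t ω ∪ (Finset.range (A t ω).card).image (fun i => X t i ω)) →
          (∀ ω, τ ω = sInf {t | n ≤ 2 * (A t ω).card}) →
          ∫⁻ ω, (τ ω : ℝ≥0∞) ∂μ ≤ ENNReal.ofReal (C * Real.log n) := by
  classical
  refine ⟨20000, by norm_num, ?_⟩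
  intro n hn Ω m0 μ hμ X A τ hXm hXu hind hA0 hAs hτ
  set F : FrogAux.Setup n Ω μ :=
    ⟨hn, X, A, hXm, hXu, hind,
      fun ω ω' => by rw [hA0 ω, hA0 ω'],
      fun ω => by rw [hA0 ω]; exact Finset.card_singleton _,
      hAs⟩ with hF
  have hFA : ∀ t ω, F.A t ω = A t ω := fun t ω => rfl
  -- measurability of the tail events of τ
  have htail_eq : ∀ t : ℕ, {ω | t < τ ω}
      = (⋃ s, {ω | n ≤ 2 * (A s ω).card})
        ∩ (⋂ s, ⋂ (_ : s ≤ t), {ω | n ≤ 2 * (A s ω).card}ᶜ) := by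
    intro t
    ext ω
    simp only [Set.mem_inter_iff, Set.mem_iUnion, Set.mem_iInter, Set.mem_compl_iff,
      Set.mem_setOf_eq]
    constructor
    · intro ht
      constructor
      · by_contra hc
        push_neg at hc
        have hempty : {t' | n ≤ 2 * (A t' ω).card} = ∅ := by
          ext s; simp only [Set.mem_setOf_eq, Set.mem_empty_iff_false, iff_false]
          exact fun h => absurd h (by have := hc s; omega)
        rw [hτ ω, hempty, Nat.sInf_empty] at ht
        omega
      · intro s hs hmem
        have : s ∈ {t' | n ≤ 2 * (A t' ω).card} := hmem
        have := Nat.sInf_le this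
        rw [← hτ ω] at this
        omega
    · rintro ⟨⟨s₀, hs₀⟩, hall⟩
      have hne : {t' | n ≤ 2 * (A t' ω).card}.Nonempty := ⟨s₀, hs₀⟩
      have hmem := Nat.sInf_mem hne
      rw [← hτ ω] at hmem
      by_contra hc
      exact hall (τ ω) (by omega) hmem
  have htail_meas : ∀ t : ℕ, MeasurableSet {ω | t < τ ω} := by
    intro t
    rw [htail_eq t]
    exact (MeasurableSet.iUnion fun s => F.meas_halved s).inter
      (MeasurableSet.iInter fun s => MeasurableSet.iInter fun _ => (F.meas_halved s).compl)
  -- expected value as a sum of tail probabilities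
  have hpoint : ∀ ω, (τ ω : ℝ≥0∞)
      = ∑' t, Set.indicator {ω' | t < τ ω'} (fun _ => (1 : ℝ≥0∞)) ω := by
    intro ω
    have hind1 : ∀ t, Set.indicator {ω' | t < τ ω'} (fun _ => (1 : ℝ≥0∞)) ω
        = if t < τ ω then 1 else 0 := by
      intro t
      rw [Set.indicator_apply]
      rfl
    rw [tsum_congr hind1,
      tsum_eq_sum (s := Finset.range (τ ω)) (fun b hb => by
        rw [Finset.mem_range] at hb
        simp only [ite_eq_right_iff]
        intro hlt
        omega)]
    have hone : ∀ t ∈ Finset.range (τ ω), (if t < τ ω then (1:ℝ≥0∞) else 0) = 1 := by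
      intro t ht
      rw [Finset.mem_range] at ht
      simp [ht]
    rw [Finset.sum_congr rfl hone, Finset.sum_const, Finset.card_range, nsmul_eq_mul, mul_one]
  have hexp : ∫⁻ ω, (τ ω : ℝ≥0∞) ∂μ = ∑' t, μ {ω | t < τ ω} := by
    calc ∫⁻ ω, (τ ω : ℝ≥0∞) ∂μ
        = ∫⁻ ω, ∑' t, Set.indicator {ω' | t < τ ω'} (fun _ => (1 : ℝ≥0∞)) ω ∂μ :=
          lintegral_congr hpoint
      _ = ∑' t, ∫⁻ ω, Set.indicator {ω' | t < τ ω'} (fun _ => (1 : ℝ≥0∞)) ω ∂μ :=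
          lintegral_tsum (fun t => (measurable_const.indicator (htail_meas t)).aemeasurable)
      _ = ∑' t, μ {ω | t < τ ω} := tsum_congr fun t => by
          rw [lintegral_indicator_const (htail_meas t), one_mul]
  set L := FrogAux.lvl n 1 with hL
  -- tail events are contained in low-success-count events
  have hsub : ∀ t : ℕ, {ω | t < τ ω} ⊆ {ω | F.Scnt t ω ≤ L - 1} := by
    intro t ω ht
    simp only [Set.mem_setOf_eq] at ht ⊢
    have hhalf : ∀ s ≤ t, 2 * (A s ω).card < n := by
      intro s hs
      by_contra hc
      push_neg at hc
      have hmem : s ∈ {t' | n ≤ 2 * (A t' ω).card} := hc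
      have := Nat.sInf_le hmem
      rw [← hτ ω] at this
      omega
    have hlp := F.lvl_plus_Scnt ω t hhalf
    have hl1 : 1 ≤ FrogAux.lvl n ((F.A t ω).card) :=
      FrogAux.lvl_pos n _ (hhalf t le_rfl)
    omega
  have hbound : ∫⁻ ω, (τ ω : ℝ≥0∞) ∂μ ≤ 6 * (((L - 1 : ℕ) : ℝ≥0∞) + 1) := by
    rw [hexp]
    calc ∑' t, μ {ω | t < τ ω}
        ≤ ∑' t, FrogAux.Q t (L - 1) := ENNReal.tsum_le_tsum fun t =>
          le_trans (measure_mono (hsub t)) (F.Scnt_le_Q t (L - 1))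
      _ ≤ 6 * (((L - 1 : ℕ) : ℝ≥0∞) + 1) := FrogAux.Q_tsum_le (L - 1)
  have hLlog : L ≤ 8 * Nat.log 2 n + 2055 := FrogAux.lvl_le_log n hn
  have hcast : (6 : ℝ≥0∞) * (((L - 1 : ℕ) : ℝ≥0∞) + 1)
      ≤ ((48 * Nat.log 2 n + 12336 : ℕ) : ℝ≥0∞) := by
    have hnat : 6 * ((L - 1) + 1) ≤ 48 * Nat.log 2 n + 12336 := by omega
    calc (6 : ℝ≥0∞) * (((L - 1 : ℕ) : ℝ≥0∞) + 1)
        = ((6 * ((L - 1) + 1) : ℕ) : ℝ≥0∞) := by push_cast; ring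
      _ ≤ _ := by exact_mod_cast hnat
  refine le_trans hbound (le_trans hcast ?_)
  rw [← ENNReal.ofReal_natCast (48 * Nat.log 2 n + 12336)]
  apply ENNReal.ofReal_le_ofReal
  have hlgle : (Nat.log 2 n : ℝ) * Real.log 2 ≤ Real.log n := by
    rw [← Real.log_pow]
    apply Real.log_le_log (by positivity)
    exact_mod_cast Nat.pow_log_le_self 2 (by omega)
  have h2 : (0.6931 : ℝ) ≤ Real.log 2 := by
    have := Real.log_two_gt_d9
    linarith
  have h3 : Real.log 2 ≤ Real.log n := by
    apply Real.log_le_log (by norm_num)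
    exact_mod_cast hn
  have h0 : (0 : ℝ) ≤ (Nat.log 2 n : ℝ) := Nat.cast_nonneg _
  have hprod : (Nat.log 2 n : ℝ) * 0.6931 ≤ (Nat.log 2 n : ℝ) * Real.log 2 :=
    mul_le_mul_of_nonneg_left h2 h0
  push_cast
  nlinarith [hprod, hlgle, h3]
end

section
/- Let n ≥ 1, let (X_t)_{t ≥ 1} be an i.i.d. sequence of random variables each uniformly distributed on Fin n, let T = inf{t : {X_1, …, X_t} = Fin n}, and for 0 ≤ i ≤ n let τ_i = inf{t : |{X_1, …, X_t}| = i} (so τ_0 = 0 and τ_n = T). Then the increments (τ_{i+1} − τ_i)_{i=0}^{n−1} are mutually independent, and each increment τ_{i+1} − τ_i has the geometric distribution with success probability (n−i)/n: P(τ_{i+1} − τ_i = s) = (i/n)^{s−1}·(n−i)/n for every integer s ≥ 1. -/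
open MeasureTheory ProbabilityTheory Finset
open scoped ENNReal

namespace CoverTimeAux

/-! ### Pure arithmetic: partial sums and level function -/

/-- partial sums of `s` -/
def psum (s : ℕ → ℕ) (i : ℕ) : ℕ := ∑ j ∈ Finset.range i, s j

/-- level function: number of blocks completed by time `u` -/
def lev (n : ℕ) (s : ℕ → ℕ) (u : ℕ) : ℕ :=
  ((Finset.range n).filter (fun i => psum s (i+1) ≤ u)).card

/-- weight: number of admissible values at step `u` -/
def w (n : ℕ) (s : ℕ → ℕ) (u : ℕ) : ℕ :=
  if lev n s u = lev n s (u-1) then lev n s (u-1) else n - lev n s (u-1)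

variable {n : ℕ} {s : ℕ → ℕ}

lemma psum_mono : Monotone (psum s) := fun a b h => Finset.sum_le_sum_of_subset (Finset.range_subset_range.2 h)

lemma psum_succ (i : ℕ) : psum s (i+1) = psum s i + s i := Finset.sum_range_succ _ _

lemma psum_zero : psum s 0 = 0 := rfl

lemma psum_lt_psum_succ (hs : ∀ i < n, 1 ≤ s i) {i : ℕ} (hi : i < n) :
    psum s i < psum s (i+1) := by
  have := hs i hi; rw [psum_succ]; omega

lemma psum_lt_psum (hs : ∀ i < n, 1 ≤ s i) {i j : ℕ} (hij : i < j) (hj : j ≤ n) :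
    psum s i < psum s j := by
  have h1 : psum s i < psum s (i+1) := psum_lt_psum_succ hs (by omega)
  have h2 : psum s (i+1) ≤ psum s j := psum_mono (by omega)
  omega

lemma le_psum (hs : ∀ i < n, 1 ≤ s i) {i : ℕ} (hi : i ≤ n) : i ≤ psum s i := by
  induction i with
  | zero => simp [psum_zero]
  | succ k ih =>
    have := hs k (by omega)
    have := ih (by omega)
    rw [psum_succ]; omega

lemma lev_eq (hs : ∀ i < n, 1 ≤ s i) {i u : ℕ} (hi : i < n)
    (h1 : psum s i ≤ u) (h2 : u < psum s (i+1)) : lev n s u = i := by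
  have : (Finset.range n).filter (fun j => psum s (j+1) ≤ u) = Finset.range i := by
    ext j
    simp only [Finset.mem_filter, Finset.mem_range]
    constructor
    · rintro ⟨hjn, hj⟩
      by_contra hcon
      have hij : i ≤ j := by omega
      have : psum s (i+1) ≤ psum s (j+1) := psum_mono (by omega)
      omega
    · intro hj
      have h3 : psum s (j+1) ≤ psum s i := psum_mono (by omega)
      exact ⟨by omega, by omega⟩
  rw [lev, this, Finset.card_range]

lemma lev_psum (hs : ∀ i < n, 1 ≤ s i) {i : ℕ} (hi : i ≤ n) : lev n s (psum s i) = i := by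
  rcases lt_or_eq_of_le hi with h | h
  · exact lev_eq hs h le_rfl (psum_lt_psum_succ hs h)
  · rw [h]
    have : (Finset.range n).filter (fun j => psum s (j+1) ≤ psum s n) = Finset.range n := by
      apply Finset.filter_true_of_mem
      intro j hj
      exact psum_mono (Finset.mem_range.1 hj)
    rw [lev, this, Finset.card_range]

lemma lev_zero (hs : ∀ i < n, 1 ≤ s i) (hn : 1 ≤ n) : lev n s 0 = 0 := by
  have := psum_lt_psum_succ hs (show 0 < n by omega)
  exact lev_eq hs (by omega) le_rfl (by simpa [psum_zero] using this)

lemma lev_mono : Monotone (lev n s) := by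
  intro a b hab
  apply Finset.card_le_card
  intro j hj
  simp only [Finset.mem_filter] at hj ⊢
  exact ⟨hj.1, le_trans hj.2 hab⟩

lemma lev_lt (hs : ∀ i < n, 1 ≤ s i) {i u : ℕ} (hi : i ≤ n) (hu : u < psum s i) :
    lev n s u < i := by
  have hi0 : 0 < i := by
    by_contra h
    have : i = 0 := by omega
    subst this
    simp [psum_zero] at hu
  have : (Finset.range n).filter (fun j => psum s (j+1) ≤ u) ⊆ Finset.range (i-1) := by
    intro j hj
    simp only [Finset.mem_filter, Finset.mem_range] at hj ⊢
    by_contra hcon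
    have : i ≤ j + 1 := by omega
    have := psum_mono (s := s) this
    omega
  have := Finset.card_le_card this
  rw [Finset.card_range] at this
  rw [lev]
  omega

lemma lev_succ_le (hs : ∀ i < n, 1 ≤ s i) (u : ℕ) : lev n s (u+1) ≤ lev n s u + 1 := by
  classical
  have hsub : (Finset.range n).filter (fun j => psum s (j+1) ≤ u+1) ⊆
      (Finset.range n).filter (fun j => psum s (j+1) ≤ u) ∪
      (Finset.range n).filter (fun j => psum s (j+1) = u+1) := by
    intro j hj
    simp only [Finset.mem_filter, Finset.mem_union, Finset.mem_range] at hj ⊢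
    omega
  have hcard1 : ((Finset.range n).filter (fun j => psum s (j+1) = u+1)).card ≤ 1 := by
    apply Finset.card_le_one.2
    intro a ha b hb
    simp only [Finset.mem_filter, Finset.mem_range] at ha hb
    by_contra hab
    rcases Nat.lt_or_ge a b with h | h
    · have := psum_lt_psum hs (show a+1 < b+1 by omega) (by omega); omega
    · have hba : b < a := by omega
      have := psum_lt_psum hs (show b+1 < a+1 by omega) (by omega); omega
  calc lev n s (u+1) ≤ _ := Finset.card_le_card hsub
    _ ≤ _ := Finset.card_union_le _ _
    _ ≤ lev n s u + 1 := by rw [lev]; omega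


/-! ### Product regrouping -/

/-- geometric weight in `ℝ≥0∞` -/
noncomputable def q (n : ℕ) (i : ℕ) (k : ℕ) : ℝ≥0∞ :=
  ((i : ℝ≥0∞) * (n : ℝ≥0∞)⁻¹) ^ (k - 1) * (((n - i : ℕ) : ℝ≥0∞) * (n : ℝ≥0∞)⁻¹)

lemma prod_w_eq (hs : ∀ i < n, 1 ≤ s i) :
    ∏ u ∈ Finset.Icc 1 (psum s n), ((w n s u : ℝ≥0∞) * (n : ℝ≥0∞)⁻¹)
      = ∏ i ∈ Finset.range n, q n i (s i) := by
  suffices H : ∀ i ≤ n, ∏ u ∈ Finset.Icc 1 (psum s i), ((w n s u : ℝ≥0∞) * (n : ℝ≥0∞)⁻¹)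
      = ∏ j ∈ Finset.range i, q n j (s j) from H n le_rfl
  intro i hi
  induction i with
  | zero => simp [psum_zero]
  | succ i ih =>
    have hi' : i < n := by omega
    have hps : psum s i < psum s (i+1) := psum_lt_psum_succ hs hi'
    have hsplit : Finset.Icc 1 (psum s (i+1)) =
        Finset.Icc 1 (psum s i) ∪ Finset.Ioc (psum s i) (psum s (i+1)) := by
      ext u
      simp only [Finset.mem_Icc, Finset.mem_union, Finset.mem_Ioc]
      omega
    have hdisj : Disjoint (Finset.Icc 1 (psum s i)) (Finset.Ioc (psum s i) (psum s (i+1))) := by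
      rw [Finset.disjoint_left]
      intro u hu hu'
      simp only [Finset.mem_Icc] at hu
      simp only [Finset.mem_Ioc] at hu'
      omega
    rw [hsplit, Finset.prod_union hdisj, ih (by omega), Finset.prod_range_succ]
    congr 1
    -- product over the i-th block
    have hsplit2 : Finset.Ioc (psum s i) (psum s (i+1)) =
        insert (psum s (i+1)) (Finset.Ioo (psum s i) (psum s (i+1))) := by
      ext u
      simp only [Finset.mem_Ioc, Finset.mem_insert, Finset.mem_Ioo]
      omega
    have hnotmem : psum s (i+1) ∉ Finset.Ioo (psum s i) (psum s (i+1)) := by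
      simp [Finset.mem_Ioo]
    rw [hsplit2, Finset.prod_insert hnotmem]
    have hw_mid : ∀ u ∈ Finset.Ioo (psum s i) (psum s (i+1)), (w n s u : ℝ≥0∞) * (n:ℝ≥0∞)⁻¹
        = (i : ℝ≥0∞) * (n:ℝ≥0∞)⁻¹ := by
      intro u hu
      simp only [Finset.mem_Ioo] at hu
      have h1 : lev n s u = i := lev_eq hs hi' (by omega) hu.2
      have h2 : lev n s (u-1) = i := lev_eq hs hi' (by omega) (by omega)
      rw [w, h1, h2, if_pos rfl]
    have hw_end : (w n s (psum s (i+1)) : ℝ≥0∞) * (n:ℝ≥0∞)⁻¹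
        = ((n - i : ℕ) : ℝ≥0∞) * (n:ℝ≥0∞)⁻¹ := by
      have h1 : lev n s (psum s (i+1)) = i + 1 := lev_psum hs (by omega)
      have h2 : lev n s (psum s (i+1) - 1) = i := by
        have hsi := hs i hi'
        have := psum_succ (s := s) i
        exact lev_eq hs hi' (by omega) (by omega)
      rw [w, h1, h2, if_neg (by omega)]
    rw [Finset.prod_congr rfl hw_mid, Finset.prod_const, Nat.card_Ioo]
    have hcard : psum s (i+1) - psum s i - 1 = s i - 1 := by
      have := psum_succ (s := s) i; omega
    rw [hcard, hw_end, q]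
    ring


/-! ### The counting process -/

variable {Ω : Type}

/-- number of distinct values seen up to time `t` -/
def cnt (X : ℕ → Ω → Fin n) (t : ℕ) (ω : Ω) : ℕ :=
  ((Finset.Icc 1 t).image (fun u => X u ω)).card

/-- the set of seen values -/
def seen (X : ℕ → Ω → Fin n) (t : ℕ) (ω : Ω) : Finset (Fin n) :=
  (Finset.Icc 1 t).image (fun u => X u ω)

/-- hitting time of level `i` -/
noncomputable def tau (X : ℕ → Ω → Fin n) (i : ℕ) (ω : Ω) : ℕ :=
  sInf {t | cnt X t ω = i}

variable {X : ℕ → Ω → Fin n}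

lemma cnt_eq_card_seen (t : ℕ) (ω : Ω) : cnt X t ω = (seen X t ω).card := rfl

lemma seen_zero (ω : Ω) : seen X 0 ω = ∅ := by simp [seen]

lemma cnt_zero (ω : Ω) : cnt X 0 ω = 0 := by simp [cnt]

lemma seen_succ (t : ℕ) (ω : Ω) :
    seen X (t+1) ω = insert (X (t+1) ω) (seen X t ω) := by
  rw [seen, seen, show Finset.Icc 1 (t+1) = insert (t+1) (Finset.Icc 1 t) by
    ext u; simp only [Finset.mem_Icc, Finset.mem_insert]; omega,
    Finset.image_insert]

lemma seen_mono {a b : ℕ} (hab : a ≤ b) (ω : Ω) : seen X a ω ⊆ seen X b ω := by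
  apply Finset.image_subset_image
  intro u hu
  simp only [Finset.mem_Icc] at hu ⊢
  omega

lemma cnt_mono {a b : ℕ} (hab : a ≤ b) (ω : Ω) : cnt X a ω ≤ cnt X b ω :=
  Finset.card_le_card (seen_mono hab ω)

lemma cnt_succ_le (t : ℕ) (ω : Ω) : cnt X (t+1) ω ≤ cnt X t ω + 1 := by
  rw [cnt_eq_card_seen, cnt_eq_card_seen, seen_succ]
  exact Finset.card_insert_le _ _

lemma cnt_le (t : ℕ) (ω : Ω) : cnt X t ω ≤ n := by
  rw [cnt_eq_card_seen]
  exact le_trans (Finset.card_le_card (Finset.subset_univ _)) (by simp)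

/-- intermediate value property -/
lemma cnt_ivt {t j : ℕ} {ω : Ω} (h : j ≤ cnt X t ω) : ∃ v ≤ t, cnt X v ω = j := by
  induction t with
  | zero => exact ⟨0, le_rfl, by rw [cnt_zero] at h ⊢; omega⟩
  | succ t ih =>
    rcases le_or_gt j (cnt X t ω) with h' | h'
    · obtain ⟨v, hv, hv'⟩ := ih h'
      exact ⟨v, by omega, hv'⟩
    · have := cnt_succ_le (X := X) t ω
      exact ⟨t+1, le_rfl, by omega⟩

lemma tau_zero (ω : Ω) : tau X 0 ω = 0 :=
  Nat.sInf_eq_zero.2 (Or.inl (cnt_zero ω))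

lemma tau_eq_of {i v : ℕ} {ω : Ω} (hv : cnt X v ω = i)
    (hmin : ∀ u < v, cnt X u ω ≠ i) : tau X i ω = v := by
  apply le_antisymm (Nat.sInf_le (show v ∈ {t | cnt X t ω = i} from hv))
  by_contra hcon
  push_neg at hcon
  have hne : {t | cnt X t ω = i}.Nonempty := ⟨v, hv⟩
  have := Nat.sInf_mem hne
  exact hmin _ hcon this

lemma cnt_tau {i : ℕ} {ω : Ω} (hne : {t | cnt X t ω = i}.Nonempty) :
    cnt X (tau X i ω) ω = i := Nat.sInf_mem hne

/-! ### Event equality -/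

/-- the increment process -/
noncomputable def Dd (X : ℕ → Ω → Fin n) (i : ℕ) (ω : Ω) : ℕ :=
  tau X (i+1) ω - tau X i ω

/-- the event that the counting process follows the level function up to time `k` -/
def Ev (n : ℕ) (X : ℕ → Ω → Fin n) (s : ℕ → ℕ) (k : ℕ) : Set Ω :=
  {ω | ∀ u ≤ k, cnt X u ω = lev n s u}

lemma event_eq (hn : 1 ≤ n) (hs : ∀ i < n, 1 ≤ s i) :
    {ω : Ω | ∀ i < n, Dd X i ω = s i} = Ev n X s (psum s n) := by
  ext ω
  simp only [Set.mem_setOf_eq, Ev]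
  constructor
  · -- from increments to trajectory
    intro h
    -- first: tau i = psum i and cnt (psum i) = i for all i ≤ n
    have key : ∀ i ≤ n, tau X i ω = psum s i ∧ cnt X (psum s i) ω = i := by
      intro i hi
      induction i with
      | zero => exact ⟨tau_zero ω, by simp [psum_zero, cnt_zero]⟩
      | succ i ih =>
        obtain ⟨h1, h2⟩ := ih (by omega)
        have hii : i < n := by omega
        have hDi := h i hii
        have hsi := hs i hii
        have hne : {t | cnt X t ω = i + 1}.Nonempty := by
          by_contra hcon
          rw [Set.not_nonempty_iff_eq_empty] at hcon
          have : tau X (i+1) ω = 0 := by rw [tau, hcon]; exact Nat.sInf_empty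
          rw [Dd, this, h1] at hDi
          have hip : i ≤ psum s i := le_psum hs (by omega)
          rcases Nat.eq_zero_or_pos i with h0 | h0
          · subst h0; simp [psum_zero] at hDi; omega
          · omega
        have h3 : cnt X (tau X (i+1) ω) ω = i + 1 := cnt_tau hne
        have h4 : tau X i ω < tau X (i+1) ω := by
          by_contra hcon
          push_neg at hcon
          have := cnt_mono (X := X) hcon ω
          rw [h3] at this
          have : cnt X (tau X i ω) ω = i := by rw [h1]; exact h2
          omega
        have h5 : tau X (i+1) ω = psum s (i+1) := by
          rw [Dd] at hDi
          rw [psum_succ]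
          omega
        exact ⟨h5, by rw [← h5]; exact h3⟩
    intro u hu
    rcases Nat.eq_or_lt_of_le hu with h' | h'
    · rw [h', (key n le_rfl).2, lev_psum hs le_rfl]
    · -- find the block containing u
      have hP0 : psum s 0 ≤ u := by simp [psum_zero]
      have hspec := Nat.findGreatest_spec (P := fun i => psum s i ≤ u) (Nat.zero_le n) hP0
      set i := Nat.findGreatest (fun i => psum s i ≤ u) n with hidef
      have hile : i ≤ n := Nat.findGreatest_le n
      have hin : i < n := by
        rcases Nat.eq_or_lt_of_le hile with he | hl
        · exfalso; rw [he] at hspec; omega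
        · exact hl
      have hnext : ¬ psum s (i+1) ≤ u := by
        intro hcon
        exact Nat.findGreatest_is_greatest (Nat.lt_succ_self i) (by omega) hcon
      have hlev : lev n s u = i := lev_eq hs hin hspec (by omega)
      have hc1 : i ≤ cnt X u ω := by
        have := (key i (by omega)).2
        have := cnt_mono (X := X) hspec ω
        omega
      have hc2 : cnt X u ω ≤ i := by
        by_contra hcon
        push_neg at hcon
        obtain ⟨v, hv, hv'⟩ := cnt_ivt (show i + 1 ≤ cnt X u ω by omega)
        have : tau X (i+1) ω ≤ v := Nat.sInf_le hv'
        have := (key (i+1) (by omega)).1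
        omega
      omega
  · -- from trajectory to increments
    intro h
    have hm : ∀ i ≤ n, tau X i ω = psum s i := by
      intro i hi
      apply tau_eq_of
      · rw [h (psum s i) (psum_mono hi), lev_psum hs hi]
      · intro u hu hcon
        have hum : u ≤ psum s n := le_trans (le_of_lt hu) (psum_mono hi)
        rw [h u hum] at hcon
        have := lev_lt hs hi hu
        omega
    intro i hi
    rw [Dd, hm (i+1) (by omega), hm i (by omega), psum_succ]
    omega


/-! ### Measurability -/

section Meas
variable [MeasurableSpace Ω]

/-- tuple of the first `k` variables -/
def tup (X : ℕ → Ω → Fin n) (k : ℕ) (ω : Ω) : (Finset.Icc 1 k : Finset ℕ) → Fin n :=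
  fun u => X u ω

lemma meas_tup (hXmeas : ∀ t, Measurable (X t)) (k : ℕ) : Measurable (tup X k) :=
  measurable_pi_lambda _ (fun u => hXmeas u)

lemma meas_tup_pre (hXmeas : ∀ t, Measurable (X t)) (k : ℕ)
    (C : Set ((Finset.Icc 1 k : Finset ℕ) → Fin n)) : MeasurableSet (tup X k ⁻¹' C) :=
  meas_tup hXmeas k MeasurableSet.of_discrete

lemma seen_eq_attach_image (k : ℕ) (ω : Ω) :
    seen X k ω = (Finset.Icc 1 k).attach.image (tup X k ω) := by
  ext y
  simp only [seen, Finset.mem_image, Finset.mem_attach, true_and, Subtype.exists]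
  constructor
  · rintro ⟨u, hu, rfl⟩; exact ⟨u, hu, rfl⟩
  · rintro ⟨u, hu, rfl⟩; exact ⟨u, hu, rfl⟩

lemma meas_cnt (hXmeas : ∀ t, Measurable (X t)) (u : ℕ) : Measurable (cnt X u) := by
  have : cnt X u = (fun v : (Finset.Icc 1 u : Finset ℕ) → Fin n =>
      ((Finset.Icc 1 u).attach.image v).card) ∘ tup X u := by
    funext ω
    simp only [Function.comp_apply, cnt_eq_card_seen, seen_eq_attach_image]
  rw [this]
  exact Measurable.of_discrete.comp (meas_tup hXmeas u)

lemma tau_eq_succ_iff {i v : ℕ} {ω : Ω} :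
    tau X i ω = v + 1 ↔ (cnt X (v+1) ω = i ∧ ∀ u < v + 1, cnt X u ω ≠ i) := by
  constructor
  · intro h
    have hne : {t | cnt X t ω = i}.Nonempty := by
      by_contra hcon
      rw [Set.not_nonempty_iff_eq_empty] at hcon
      rw [tau, hcon, Nat.sInf_empty] at h
      omega
    have h1 : cnt X (tau X i ω) ω = i := cnt_tau hne
    rw [h] at h1
    refine ⟨h1, fun u hu hcon => ?_⟩
    have : tau X i ω ≤ u := Nat.sInf_le (show u ∈ {t | cnt X t ω = i} from hcon)
    omega
  · rintro ⟨h1, h2⟩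
    exact tau_eq_of h1 h2

lemma meas_tau (hXmeas : ∀ t, Measurable (X t)) (i : ℕ) : Measurable (tau X i) := by
  apply measurable_to_countable'
  intro v
  match v with
  | 0 =>
    have : tau X i ⁻¹' {0} = {ω | cnt X 0 ω = i} ∪ ⋂ u, {ω | cnt X u ω ≠ i} := by
      ext ω
      simp only [Set.mem_preimage, Set.mem_singleton_iff, Set.mem_union, Set.mem_iInter,
        Set.mem_setOf_eq, tau]
      rw [Nat.sInf_eq_zero]
      constructor
      · rintro (h | h)
        · exact Or.inl h
        · right; intro u; intro hcon
          have : u ∈ {t | cnt X t ω = i} := hcon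
          rw [h] at this; exact this
      · rintro (h | h)
        · exact Or.inl h
        · right; ext u; simp only [Set.mem_setOf_eq, Set.mem_empty_iff_false, iff_false]
          exact h u
    rw [this]
    exact ((meas_cnt hXmeas 0) (MeasurableSet.singleton i)).union
      (MeasurableSet.iInter (fun u => ((meas_cnt hXmeas u) (MeasurableSet.singleton i)).compl))
  | v + 1 =>
    have : tau X i ⁻¹' {v+1} =
        {ω | cnt X (v+1) ω = i} ∩ ⋂ u ∈ Finset.range (v+1), {ω | cnt X u ω ≠ i} := by
      ext ω
      simp only [Set.mem_preimage, Set.mem_singleton_iff, Set.mem_inter_iff, Set.mem_iInter,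
        Set.mem_setOf_eq, Finset.mem_range, tau_eq_succ_iff]
    rw [this]
    exact ((meas_cnt hXmeas (v+1)) (MeasurableSet.singleton i)).inter
      (MeasurableSet.iInter (fun u => MeasurableSet.iInter (fun _ =>
        ((meas_cnt hXmeas u) (MeasurableSet.singleton i)).compl)))

lemma meas_Dd (hXmeas : ∀ t, Measurable (X t)) (i : ℕ) : Measurable (Dd X i) :=
  (meas_tau hXmeas (i+1)).sub (meas_tau hXmeas i)

/-! ### Uniform law on finsets -/

lemma unif_finset {μ : Measure Ω} (hXmeas : ∀ t, Measurable (X t))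
    (hXunif : ∀ t x, μ {ω | X t ω = x} = (n : ℝ≥0∞)⁻¹) (t : ℕ) (B : Finset (Fin n)) :
    μ (X t ⁻¹' ↑B) = B.card * (n : ℝ≥0∞)⁻¹ := by
  have hrw : X t ⁻¹' ↑B = ⋃ x ∈ B, X t ⁻¹' {x} := by
    ext ω
    simp
  rw [hrw, measure_biUnion_finset]
  · have : ∀ x ∈ B, μ (X t ⁻¹' {x}) = (n : ℝ≥0∞)⁻¹ := by
      intro x _
      exact hXunif t x
    rw [Finset.sum_congr rfl this, Finset.sum_const, nsmul_eq_mul]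
  · intro a _ b _ hab
    apply Set.disjoint_left.2
    intro ω h1 h2
    simp only [Set.mem_preimage, Set.mem_singleton_iff] at h1 h2
    exact hab (h1 ▸ h2)
  · exact fun b _ => hXmeas t (MeasurableSet.singleton b)


lemma filter_attach_image {k u : ℕ} (hu : u ≤ k) (ω : Ω) :
    (((Finset.Icc 1 k).attach.filter (fun x => x.1 ≤ u)).image (tup X k ω)) = seen X u ω := by
  ext y
  simp only [Finset.mem_image, Finset.mem_filter, Finset.mem_attach, true_and, Subtype.exists,
    seen, tup]
  constructor
  · rintro ⟨x, hx, ⟨hxk, rfl⟩⟩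
    refine ⟨x, ?_, rfl⟩
    simp only [Finset.mem_Icc] at hx ⊢
    omega
  · rintro ⟨x, hx, rfl⟩
    simp only [Finset.mem_Icc] at hx
    exact ⟨x, by simp only [Finset.mem_Icc]; omega, by omega, rfl⟩

lemma meas_Ev (hXmeas : ∀ t, Measurable (X t)) (s : ℕ → ℕ) (k : ℕ) :
    MeasurableSet (Ev n X s k) := by
  have : Ev n X s k = ⋂ u ∈ Set.Iic k, {ω : Ω | cnt X u ω = lev n s u} := by
    ext ω
    simp [Ev, Set.mem_iInter]
  rw [this]
  exact MeasurableSet.biInter (Set.to_countable _)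
    (fun u _ => (meas_cnt hXmeas u) (MeasurableSet.singleton _))

end Meas


/-! ### The one-step conditioning lemma -/

section Step
variable [MeasurableSpace Ω] {μ : Measure Ω} [IsProbabilityMeasure μ]

lemma step_mu (hXmeas : ∀ t, Measurable (X t))
    (hXunif : ∀ t x, μ {ω | X t ω = x} = (n : ℝ≥0∞)⁻¹)
    (hXindep : iIndepFun X μ)
    (hs : ∀ i < n, 1 ≤ s i) (k : ℕ) :
    μ (Ev n X s (k+1)) = μ (Ev n X s k) * ((w n s (k+1) : ℝ≥0∞) * (n : ℝ≥0∞)⁻¹) := by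
  classical
  set L0 := lev n s k with hL0
  set L1 := lev n s (k+1) with hL1
  have hLalt : L1 = L0 ∨ L1 = L0 + 1 := by
    have h1 := lev_succ_le hs k
    have h2 : lev n s k ≤ lev n s (k+1) := lev_mono (by omega)
    omega
  -- the cylinder set for a given seen-set S
  set F : Finset (Fin n) → Set Ω := fun S => Ev n X s k ∩ {ω | seen X k ω = S} with hF
  set B : Finset (Fin n) → Finset (Fin n) := fun S => if L1 = L0 then S else Sᶜ with hB
  -- pointwise identification
  have hpoint : ∀ S : Finset (Fin n),
      F S ∩ {ω | cnt X (k+1) ω = L1} = F S ∩ (X (k+1) ⁻¹' ↑(B S)) := by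
    intro S
    ext ω
    simp only [Set.mem_inter_iff, Set.mem_setOf_eq, Set.mem_preimage, hF, hB]
    constructor
    · rintro ⟨⟨hev, hseen⟩, hcnt⟩
      refine ⟨⟨hev, hseen⟩, ?_⟩
      have hck : cnt X k ω = L0 := hev k le_rfl
      have hcard : S.card = L0 := by rw [← hseen, ← cnt_eq_card_seen, hck]
      have hins : cnt X (k+1) ω = (insert (X (k+1) ω) S).card := by
        rw [cnt_eq_card_seen, seen_succ, hseen]
      by_cases hmem : X (k+1) ω ∈ S
      · rw [Finset.insert_eq_self.2 hmem] at hins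
        have : L1 = L0 := by omega
        simp [this, hmem]
      · rw [Finset.card_insert_of_notMem hmem] at hins
        have : L1 = L0 + 1 := by omega
        have hne : ¬ (L1 = L0) := by omega
        simp [hne, hmem]
    · rintro ⟨⟨hev, hseen⟩, hmem⟩
      refine ⟨⟨hev, hseen⟩, ?_⟩
      have hck : cnt X k ω = L0 := hev k le_rfl
      have hcard : S.card = L0 := by rw [← hseen, ← cnt_eq_card_seen, hck]
      have hins : cnt X (k+1) ω = (insert (X (k+1) ω) S).card := by
        rw [cnt_eq_card_seen, seen_succ, hseen]
      by_cases hLeq : L1 = L0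
      · rw [if_pos hLeq] at hmem
        rw [Finset.mem_coe] at hmem
        rw [Finset.insert_eq_self.2 hmem] at hins
        omega
      · rw [if_neg hLeq] at hmem
        simp only [Finset.coe_compl, Set.mem_compl_iff, Finset.mem_coe] at hmem
        rw [Finset.card_insert_of_notMem hmem] at hins
        omega
  -- cylinder as a preimage of the tuple map
  have hFpre : ∀ S : Finset (Fin n), F S = tup X k ⁻¹'
      {v | (∀ u ≤ k, (((Finset.Icc 1 k).attach.filter (fun x => x.1 ≤ u)).image v).card
              = lev n s u) ∧ (Finset.Icc 1 k).attach.image v = S} := by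
    intro S
    ext ω
    simp only [hF, Set.mem_inter_iff, Set.mem_setOf_eq, Set.mem_preimage, Ev]
    constructor
    · rintro ⟨hev, hseen⟩
      constructor
      · intro u hu
        rw [filter_attach_image hu, ← cnt_eq_card_seen]
        exact hev u hu
      · rw [← seen_eq_attach_image]; exact hseen
    · rintro ⟨h1, h2⟩
      constructor
      · intro u hu
        have := h1 u hu
        rwa [filter_attach_image hu, ← cnt_eq_card_seen] at this
      · rw [← seen_eq_attach_image] at h2; exact h2
  -- independence of the tuple and the next step
  have hindep2 : IndepFun (tup X k) (X (k+1)) μ := by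
    have hdisj : Disjoint (Finset.Icc 1 k) ({k+1} : Finset ℕ) := by
      simp only [Finset.disjoint_singleton_right, Finset.mem_Icc]
      omega
    have h := hXindep.indepFun_finset (Finset.Icc 1 k) {k+1} hdisj hXmeas
    have h2 := h.comp (measurable_id) (measurable_pi_apply
      (⟨k+1, Finset.mem_singleton_self (k+1)⟩ : ({k+1} : Finset ℕ)))
    exact h2
  -- each term
  have hterm : ∀ S : Finset (Fin n),
      μ (F S ∩ {ω | cnt X (k+1) ω = L1}) = μ (F S) * ((w n s (k+1) : ℝ≥0∞) * (n : ℝ≥0∞)⁻¹) := by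
    intro S
    by_cases hcard : S.card = L0
    · rw [hpoint S]
      have hfs : F S = tup X k ⁻¹' _ := hFpre S
      rw [hfs]
      rw [hindep2.measure_inter_preimage_eq_mul _ _ MeasurableSet.of_discrete
        (MeasurableSet.of_discrete)]
      congr 1
      rw [unif_finset hXmeas hXunif (k+1) (B S)]
      congr 2
      rw [w]
      have hk1 : k + 1 - 1 = k := by omega
      rw [hk1, ← hL0, ← hL1]
      by_cases hLeq : L1 = L0
      · rw [if_pos hLeq, hB]
        simp only [if_pos hLeq]
        omega
      · rw [if_neg hLeq, hB]
        simp only [if_neg hLeq]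
        rw [Finset.card_compl]
        simp only [Fintype.card_fin]
        omega
    · have hempty : F S = ∅ := by
        ext ω
        simp only [hF, Set.mem_inter_iff, Set.mem_setOf_eq, Set.mem_empty_iff_false, iff_false,
          not_and]
        intro hev hseen
        apply hcard
        rw [← hseen, ← cnt_eq_card_seen, hev k le_rfl]
      rw [hempty]
      simp
  -- decomposition of the event
  have hdecomp : Ev n X s (k+1) = ⋃ S ∈ (Finset.univ : Finset (Finset (Fin n))),
      (F S ∩ {ω | cnt X (k+1) ω = L1}) := by
    ext ω
    constructor
    · intro h
      have h' : ∀ u ≤ k + 1, cnt X u ω = lev n s u := h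
      refine Set.mem_biUnion (Finset.mem_univ (seen X k ω)) ?_
      exact ⟨⟨fun u hu => h' u (by omega), rfl⟩, h' (k+1) le_rfl⟩
    · intro hmem
      obtain ⟨S, -, hS⟩ := Set.mem_iUnion₂.1 hmem
      obtain ⟨⟨hev, -⟩, hcnt⟩ := hS
      intro u hu
      rcases Nat.eq_or_lt_of_le hu with h' | h'
      · rw [h']; exact hcnt
      · exact hev u (by omega)
  have hmeasF : ∀ S : Finset (Fin n), MeasurableSet (F S) := by
    intro S
    rw [hFpre S]
    exact meas_tup_pre hXmeas k _
  have hmeascnt : MeasurableSet {ω : Ω | cnt X (k+1) ω = L1} :=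
    (meas_cnt hXmeas (k+1)) (MeasurableSet.singleton L1)
  have hdisjF : ((Finset.univ : Finset (Finset (Fin n))) : Set (Finset (Fin n))).PairwiseDisjoint
      (fun S => F S ∩ {ω | cnt X (k+1) ω = L1}) := by
    intro a _ b _ hab
    apply Set.disjoint_left.2
    intro ω h1 h2
    exact hab (h1.1.2 ▸ h2.1.2)
  rw [hdecomp, measure_biUnion_finset hdisjF (fun S _ => (hmeasF S).inter hmeascnt)]
  rw [Finset.sum_congr rfl (fun S _ => hterm S), ← Finset.sum_mul]
  congr 1
  have hdecomp2 : Ev n X s k = ⋃ S ∈ (Finset.univ : Finset (Finset (Fin n))), F S := by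
    ext ω
    constructor
    · intro h
      exact Set.mem_biUnion (Finset.mem_univ (seen X k ω)) ⟨h, rfl⟩
    · intro hmem
      obtain ⟨S, -, hS⟩ := Set.mem_iUnion₂.1 hmem
      exact hS.1
  have hdisjF2 : ((Finset.univ : Finset (Finset (Fin n))) : Set (Finset (Fin n))).PairwiseDisjoint F := by
    intro a _ b _ hab
    apply Set.disjoint_left.2
    intro ω h1 h2
    exact hab (h1.2 ▸ h2.2)
  rw [hdecomp2, measure_biUnion_finset hdisjF2 (fun S _ => hmeasF S)]


lemma Ev_zero (hn : 1 ≤ n) (hs : ∀ i < n, 1 ≤ s i) : Ev n X s 0 = (Set.univ : Set Ω) := by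
  ext ω
  simp only [Ev, Set.mem_setOf_eq, Set.mem_univ, iff_true]
  intro u hu
  rw [Nat.le_zero.1 hu, cnt_zero, lev_zero hs hn]

lemma mu_Ev (hn : 1 ≤ n) (hXmeas : ∀ t, Measurable (X t))
    (hXunif : ∀ t x, μ {ω | X t ω = x} = (n : ℝ≥0∞)⁻¹)
    (hXindep : iIndepFun X μ)
    (hs : ∀ i < n, 1 ≤ s i) (k : ℕ) :
    μ (Ev n X s k) = ∏ u ∈ Finset.Icc 1 k, ((w n s u : ℝ≥0∞) * (n : ℝ≥0∞)⁻¹) := by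
  induction k with
  | zero => simp [Ev_zero hn hs]
  | succ k ih =>
    rw [step_mu hXmeas hXunif hXindep hs k, ih,
      show Finset.Icc 1 (k+1) = insert (k+1) (Finset.Icc 1 k) by
        ext u; simp only [Finset.mem_Icc, Finset.mem_insert]; omega,
      Finset.prod_insert (by simp only [Finset.mem_Icc]; omega)]
    ring

lemma joint_full (hn : 1 ≤ n) (hXmeas : ∀ t, Measurable (X t))
    (hXunif : ∀ t x, μ {ω | X t ω = x} = (n : ℝ≥0∞)⁻¹)
    (hXindep : iIndepFun X μ)
    (hs : ∀ i < n, 1 ≤ s i) :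
    μ {ω | ∀ i < n, Dd X i ω = s i} = ∏ i ∈ Finset.range n, q n i (s i) := by
  rw [event_eq hn hs, mu_Ev hn hXmeas hXunif hXindep hs, prod_w_eq hs]

end Step


/-! ### Null events -/

section Null
variable [MeasurableSpace Ω] {μ : Measure Ω} [IsProbabilityMeasure μ]

lemma null_never (hn : 1 ≤ n) (hXmeas : ∀ t, Measurable (X t))
    (hXunif : ∀ t x, μ {ω | X t ω = x} = (n : ℝ≥0∞)⁻¹)
    (hXindep : iIndepFun X μ) (x : Fin n) :
    μ (⋂ u : ℕ, {ω | X (u+1) ω ≠ x}) = 0 := by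
  classical
  set r : ℝ≥0∞ := ((n-1 : ℕ) : ℝ≥0∞) * (n : ℝ≥0∞)⁻¹ with hr
  have hbound : ∀ k : ℕ, μ (⋂ u : ℕ, {ω | X (u+1) ω ≠ x}) ≤ r ^ k := by
    intro k
    have hsub : (⋂ u : ℕ, {ω : Ω | X (u+1) ω ≠ x}) ⊆
        ⋂ u ∈ Finset.Icc 1 k, X u ⁻¹' ({x}ᶜ : Set (Fin n)) := by
      intro ω hω
      simp only [Set.mem_iInter, Set.mem_setOf_eq] at hω
      simp only [Set.mem_iInter, Set.mem_preimage, Set.mem_compl_iff, Set.mem_singleton_iff]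
      intro u hu
      simp only [Finset.mem_Icc] at hu
      have := hω (u - 1)
      rwa [show u - 1 + 1 = u by omega] at this
    refine le_trans (measure_mono hsub) ?_
    rw [iIndepFun_iff_measure_inter_preimage_eq_mul.1 hXindep (Finset.Icc 1 k)
      (fun u _ => (MeasurableSet.singleton x).compl)]
    have heach : ∀ u ∈ Finset.Icc 1 k, μ (X u ⁻¹' ({x}ᶜ : Set (Fin n))) = r := by
      intro u _
      have : (({x}ᶜ : Set (Fin n))) = ↑(({x} : Finset (Fin n))ᶜ) := by simp
      rw [this, unif_finset hXmeas hXunif u, Finset.card_compl, Finset.card_singleton,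
        Fintype.card_fin]
    rw [Finset.prod_congr rfl heach, Finset.prod_const, Nat.card_Icc]
    simp
  have hrlt : r < 1 := by
    rw [hr, ← div_eq_mul_inv, ENNReal.div_lt_iff (by simp; omega) (by simp)]
    simp only [one_mul]
    exact_mod_cast Nat.sub_lt (by omega) one_pos
  have htend := ENNReal.tendsto_pow_atTop_nhds_zero_of_lt_one hrlt
  have := ge_of_tendsto' htend hbound
  exact le_antisymm this zero_le

lemma null_D (hn : 1 ≤ n) (hXmeas : ∀ t, Measurable (X t))
    (hXunif : ∀ t x, μ {ω | X t ω = x} = (n : ℝ≥0∞)⁻¹)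
    (hXindep : iIndepFun X μ) {j : ℕ} (hj : j < n) :
    μ {ω | Dd X j ω = 0} = 0 := by
  classical
  have hsub : {ω : Ω | Dd X j ω = 0} ⊆ ⋃ x : Fin n, ⋂ u : ℕ, {ω | X (u+1) ω ≠ x} := by
    intro ω hω
    simp only [Set.mem_setOf_eq] at hω
    by_cases hne : {t | cnt X t ω = j + 1}.Nonempty
    · exfalso
      have h1 : cnt X (tau X (j+1) ω) ω = j + 1 := cnt_tau hne
      have hne2 : {t | cnt X t ω = j}.Nonempty := by
        obtain ⟨v, hv, hv'⟩ := cnt_ivt (show j ≤ cnt X (tau X (j+1) ω) ω by omega)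
        exact ⟨v, hv'⟩
      have h2 : cnt X (tau X j ω) ω = j := cnt_tau hne2
      have h3 : tau X j ω < tau X (j+1) ω := by
        by_contra hcon
        push_neg at hcon
        have := cnt_mono (X := X) hcon ω
        omega
      rw [Dd] at hω
      omega
    · -- the count never reaches j+1, hence stays ≤ j < n, so some value is never seen
      rw [Set.not_nonempty_iff_eq_empty] at hne
      have hle : ∀ t, cnt X t ω ≤ j := by
        intro t
        by_contra hcon
        push_neg at hcon
        obtain ⟨v, _, hv'⟩ := cnt_ivt (show j + 1 ≤ cnt X t ω by omega)
        have : v ∈ {t | cnt X t ω = j + 1} := hv'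
        rw [hne] at this
        exact this
      simp only [Set.mem_iUnion, Set.mem_iInter, Set.mem_setOf_eq]
      by_contra hcon
      push_neg at hcon
      choose f hf using hcon
      set T := Finset.univ.sup f + 1 with hT
      have hall : ∀ x : Fin n, x ∈ seen X T ω := by
        intro x
        rw [seen, Finset.mem_image]
        refine ⟨f x + 1, ?_, hf x⟩
        simp only [Finset.mem_Icc]
        have : f x ≤ Finset.univ.sup f := Finset.le_sup (Finset.mem_univ x)
        omega
      have : cnt X T ω = n := by
        rw [cnt_eq_card_seen]
        have : seen X T ω = Finset.univ := Finset.eq_univ_iff_forall.2 hall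
        rw [this, Finset.card_univ, Fintype.card_fin]
      have := hle T
      omega
  refine measure_mono_null hsub ?_
  exact measure_iUnion_null (fun x => null_never hn hXmeas hXunif hXindep x)

end Null


/-! ### Geometric series -/

lemma q_tsum (hn : 1 ≤ n) {j : ℕ} (hj : j < n) : ∑' k : ℕ, q n j (k+1) = 1 := by
  have hn0 : (n : ℝ≥0∞) ≠ 0 := by simp; omega
  have hnt : (n : ℝ≥0∞) ≠ ⊤ := by simp
  set a : ℝ≥0∞ := (j : ℝ≥0∞) * (n : ℝ≥0∞)⁻¹ with ha
  set c : ℝ≥0∞ := ((n - j : ℕ) : ℝ≥0∞) * (n : ℝ≥0∞)⁻¹ with hc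
  have hq : ∀ k : ℕ, q n j (k+1) = a ^ k * c := by
    intro k
    rw [q]
    congr 1
  have hac : a + c = 1 := by
    rw [ha, hc, ← add_mul]
    have : (j : ℝ≥0∞) + ((n - j : ℕ) : ℝ≥0∞) = (n : ℝ≥0∞) := by
      rw [← Nat.cast_add]
      congr 1
      omega
    rw [this, ENNReal.mul_inv_cancel hn0 hnt]
  have hane : a ≠ ⊤ := by
    rw [ha]
    exact ENNReal.mul_ne_top (by simp) (ENNReal.inv_ne_top.2 hn0)
  have hsub : 1 - a = c := ENNReal.sub_eq_of_eq_add hane (by rw [← hac, add_comm])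
  have hc0 : c ≠ 0 := by
    rw [hc]
    apply mul_ne_zero
    · exact Nat.cast_ne_zero.2 (by omega)
    · exact ENNReal.inv_ne_zero.2 hnt
  have hct : c ≠ ⊤ := ENNReal.mul_ne_top (by simp) (ENNReal.inv_ne_top.2 hn0)
  calc ∑' k : ℕ, q n j (k+1) = ∑' k : ℕ, a ^ k * c := by rw [tsum_congr hq]
    _ = (∑' k : ℕ, a ^ k) * c := ENNReal.tsum_mul_right
    _ = (1 - a)⁻¹ * c := by rw [ENNReal.tsum_geometric]
    _ = c⁻¹ * c := by rw [hsub]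
    _ = 1 := ENNReal.inv_mul_cancel hc0 hct

/-! ### Marginalization -/

section Marg
variable [MeasurableSpace Ω] {μ : Measure Ω} [IsProbabilityMeasure μ]

lemma joint_subset (hn : 1 ≤ n) (hXmeas : ∀ t, Measurable (X t))
    (hXunif : ∀ t x, μ {ω | X t ω = x} = (n : ℝ≥0∞)⁻¹)
    (hXindep : iIndepFun X μ)
    (r : ℕ) (S : Finset (Fin n)) (hcard : S.card + r = n)
    (s : Fin n → ℕ) (hs : ∀ i ∈ S, 1 ≤ s i) :
    μ (⋂ i ∈ S, {ω | Dd X (i : ℕ) ω = s i}) = ∏ i ∈ S, q n (i : ℕ) (s i) := by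
  classical
  induction r generalizing S s with
  | zero =>
    have hSuniv : S = Finset.univ := by
      apply Finset.eq_univ_of_card
      rw [Fintype.card_fin]
      omega
    subst hSuniv
    set s' : ℕ → ℕ := fun j => if h : j < n then s ⟨j, h⟩ else 1 with hs'
    have hs'eq : ∀ i : Fin n, s' (i : ℕ) = s i := by
      intro i
      show (if h : (i:ℕ) < n then s ⟨(i:ℕ), h⟩ else 1) = s i
      rw [dif_pos i.2]
    have hs'1 : ∀ i < n, 1 ≤ s' i := by
      intro i hi
      have := hs'eq ⟨i, hi⟩
      simp only at this
      rw [this]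
      exact hs _ (Finset.mem_univ _)
    have hsetEq : (⋂ i ∈ (Finset.univ : Finset (Fin n)), {ω : Ω | Dd X (i : ℕ) ω = s i})
        = {ω | ∀ i < n, Dd X i ω = s' i} := by
      ext ω
      simp only [Set.mem_iInter, Finset.mem_univ, Set.mem_setOf_eq, true_implies]
      constructor
      · intro h i hi
        rw [show s' i = s ⟨i, hi⟩ from hs'eq ⟨i, hi⟩]
        exact h ⟨i, hi⟩
      · intro h i
        have := h (i : ℕ) i.2
        rwa [hs'eq i] at this
    rw [hsetEq, joint_full hn hXmeas hXunif hXindep hs'1]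
    rw [← Fin.prod_univ_eq_prod_range (fun j => q n j (s' j)) n]
    apply Finset.prod_congr rfl
    intro i _
    congr 1
    exact hs'eq i
  | succ r ih =>
    have hSc : Sᶜ.Nonempty := by
      rw [← Finset.card_pos, Finset.card_compl, Fintype.card_fin]
      omega
    obtain ⟨j, hj⟩ := hSc
    have hjS : j ∉ S := Finset.mem_compl.1 hj
    have hsetEq : (⋂ i ∈ S, {ω : Ω | Dd X (i : ℕ) ω = s i})
        = ⋃ k : ℕ, ⋂ i ∈ insert j S, {ω : Ω | Dd X (i : ℕ) ω = Function.update s j k i} := by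
      ext ω
      simp only [Set.mem_iUnion, Set.mem_iInter, Finset.mem_insert, Set.mem_setOf_eq]
      constructor
      · intro h
        refine ⟨Dd X (j : ℕ) ω, fun i hi => ?_⟩
        rcases hi with rfl | hi
        · rw [Function.update_self]
        · have hij : i ≠ j := fun hcon => hjS (hcon ▸ hi)
          rw [Function.update_of_ne hij]
          exact h i hi
      · rintro ⟨k, h⟩
        intro i hi
        have hij : i ≠ j := fun hcon => hjS (hcon ▸ hi)
        have := h i (Or.inr hi)
        rwa [Function.update_of_ne hij] at this
    have hmeasI : ∀ (s'' : Fin n → ℕ) (T : Finset (Fin n)),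
        MeasurableSet (⋂ i ∈ T, {ω : Ω | Dd X (i : ℕ) ω = s'' i}) := by
      intro s'' T
      apply MeasurableSet.biInter (Finset.countable_toSet T)
      intro i _
      exact (meas_Dd hXmeas (i : ℕ)) (MeasurableSet.singleton _)
    have hdisj : Pairwise (Function.onFun Disjoint
        (fun k => ⋂ i ∈ insert j S, {ω : Ω | Dd X (i : ℕ) ω = Function.update s j k i})) := by
      intro k1 k2 hk
      apply Set.disjoint_left.2
      intro ω h1 h2
      simp only [Set.mem_iInter] at h1 h2
      have e1 := h1 j (Finset.mem_insert_self j S)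
      have e2 := h2 j (Finset.mem_insert_self j S)
      rw [Function.update_self] at e1 e2
      exact hk (by rw [← e1, ← e2])
    rw [hsetEq, measure_iUnion hdisj (fun k => hmeasI _ _)]
    have hterm0 : μ (⋂ i ∈ insert j S, {ω : Ω | Dd X (i : ℕ) ω = Function.update s j 0 i}) = 0 := by
      apply measure_mono_null ?_ (null_D hn hXmeas hXunif hXindep j.2)
      intro ω h
      simp only [Set.mem_iInter] at h
      have := h j (Finset.mem_insert_self j S)
      rwa [Function.update_self] at this
    have hterm : ∀ k : ℕ,
        μ (⋂ i ∈ insert j S, {ω : Ω | Dd X (i : ℕ) ω = Function.update s j (k+1) i})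
          = q n (j : ℕ) (k+1) * ∏ i ∈ S, q n (i : ℕ) (s i) := by
      intro k
      rw [ih (insert j S) (by rw [Finset.card_insert_of_notMem hjS]; omega)
        (Function.update s j (k+1)) ?_]
      · rw [Finset.prod_insert hjS, Function.update_self]
        congr 1
        apply Finset.prod_congr rfl
        intro i hi
        rw [Function.update_of_ne (fun hcon => hjS (by rw [← hcon]; exact hi))]
      · intro i hi
        rcases Finset.mem_insert.1 hi with rfl | hi'
        · rw [Function.update_self]; omega
        · rw [Function.update_of_ne (fun hcon => hjS (by rw [← hcon]; exact hi'))]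
          exact hs i hi'
    rw [tsum_eq_zero_add' ENNReal.summable, hterm0, zero_add, tsum_congr hterm,
      ENNReal.tsum_mul_right, q_tsum hn j.2, one_mul]

end Marg


section Final
variable [MeasurableSpace Ω] {μ : Measure Ω} [IsProbabilityMeasure μ]

lemma marginal (hn : 1 ≤ n) (hXmeas : ∀ t, Measurable (X t))
    (hXunif : ∀ t x, μ {ω | X t ω = x} = (n : ℝ≥0∞)⁻¹)
    (hXindep : iIndepFun X μ)
    (i : Fin n) (s₀ : ℕ) (hs₀ : 1 ≤ s₀) :
    μ {ω | Dd X (i : ℕ) ω = s₀} = q n (i : ℕ) s₀ := by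
  have h := joint_subset hn hXmeas hXunif hXindep (n-1) {i}
    (by rw [Finset.card_singleton]; omega) (fun _ => s₀) (fun _ _ => hs₀)
  simpa using h

lemma q_ofReal (hn : 1 ≤ n) (i : Fin n) (s₀ : ℕ) :
    q n (i : ℕ) s₀ = ENNReal.ofReal ((((i : ℕ) : ℝ) / n) ^ (s₀ - 1) * ((n : ℝ) - ((i : ℕ) : ℝ)) / n) := by
  have hnR : (0 : ℝ) < n := by
    have : 0 < n := hn
    exact_mod_cast this
  have hcast : ((n : ℝ) - ((i : ℕ) : ℝ)) = (((n - (i : ℕ)) : ℕ) : ℝ) :=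
    (Nat.cast_sub (le_of_lt i.2)).symm
  rw [q, mul_div_assoc, ENNReal.ofReal_mul (by positivity),
    ENNReal.ofReal_pow (by positivity), hcast, ENNReal.ofReal_div_of_pos hnR,
    ENNReal.ofReal_div_of_pos hnR]
  simp only [ENNReal.ofReal_natCast]
  rw [div_eq_mul_inv, div_eq_mul_inv]

lemma indep_Dd (hn : 1 ≤ n) (hXmeas : ∀ t, Measurable (X t))
    (hXunif : ∀ t x, μ {ω | X t ω = x} = (n : ℝ≥0∞)⁻¹)
    (hXindep : iIndepFun X μ) :
    iIndepFun (fun i : Fin n => Dd X (i : ℕ)) μ := by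
  classical
  have hNatGen : (inferInstance : MeasurableSpace ℕ) =
      MeasurableSpace.generateFrom (Set.range fun k => ({k} : Set ℕ)) := by
    apply le_antisymm
    · intro t _
      rw [← Set.biUnion_of_singleton t]
      exact MeasurableSet.biUnion t.to_countable
        (fun k _ => MeasurableSpace.measurableSet_generateFrom ⟨k, rfl⟩)
    · exact MeasurableSpace.generateFrom_le (fun t ⟨k, hk⟩ => hk ▸ measurableSet_singleton k)
  set π : Fin n → Set (Set Ω) := fun i => Set.range (fun k : ℕ => Dd X (i : ℕ) ⁻¹' {k}) with hπ
  have h_pi : ∀ i, IsPiSystem (π i) := by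
    rintro i _ ⟨k1, rfl⟩ _ ⟨k2, rfl⟩ hne
    obtain ⟨ω, h1, h2⟩ := hne
    simp only [Set.mem_preimage, Set.mem_singleton_iff] at h1 h2
    have : k1 = k2 := by rw [← h1, ← h2]
    subst this
    rw [Set.inter_self]
    exact ⟨k1, rfl⟩
  have h_gen : ∀ i : Fin n, MeasurableSpace.comap (Dd X (i : ℕ)) inferInstance
      = MeasurableSpace.generateFrom (π i) := by
    intro i
    rw [hNatGen, MeasurableSpace.comap_generateFrom]
    congr 1
    rw [← Set.range_comp]
    rfl
  have h_le : ∀ i : Fin n, MeasurableSpace.comap (Dd X (i : ℕ)) inferInstance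
      ≤ (inferInstance : MeasurableSpace Ω) := fun i => (meas_Dd hXmeas _).comap_le
  have h_ind : iIndepSets π μ := by
    rw [iIndepSets_iff]
    intro S f hf
    have hk : ∀ i ∈ S, ∃ kk : ℕ, Dd X (i : ℕ) ⁻¹' {kk} = f i := fun i hi => hf i hi
    choose k hk2 using hk
    by_cases hz : ∀ i (hi : i ∈ S), 1 ≤ k i hi
    · set s : Fin n → ℕ := fun i => if h : i ∈ S then k i h else 1 with hsdef
      have hseq : ∀ i (hi : i ∈ S), s i = k i hi := by
        intro i hi
        show (if h : i ∈ S then k i h else 1) = k i hi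
        rw [dif_pos hi]
      have hinter : (⋂ i ∈ S, f i) = ⋂ i ∈ S, {ω | Dd X (i : ℕ) ω = s i} := by
        apply Set.iInter₂_congr
        intro i hi
        rw [← hk2 i hi]
        ext ω
        simp only [Set.mem_preimage, Set.mem_singleton_iff, Set.mem_setOf_eq, hseq i hi]
      have hs1 : ∀ i ∈ S, 1 ≤ s i := fun i hi => by rw [hseq i hi]; exact hz i hi
      rw [hinter, joint_subset hn hXmeas hXunif hXindep (n - S.card) S
        (by have := Finset.card_le_univ S; simp only [Finset.card_univ, Fintype.card_fin] at this; omega)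
        s hs1]
      apply Finset.prod_congr rfl
      intro i hi
      rw [← hk2 i hi]
      have : Dd X (i : ℕ) ⁻¹' {k i hi} = {ω | Dd X (i : ℕ) ω = s i} := by
        ext ω
        simp only [Set.mem_preimage, Set.mem_singleton_iff, Set.mem_setOf_eq, hseq i hi]
      rw [this, marginal hn hXmeas hXunif hXindep i (s i) (hs1 i hi)]
    · push_neg at hz
      obtain ⟨i0, hi0, hk0⟩ := hz
      have hk0' : k i0 hi0 = 0 := by omega
      have hf0 : μ (f i0) = 0 := by
        rw [← hk2 i0 hi0, hk0']
        have : Dd X (i0 : ℕ) ⁻¹' {0} = {ω | Dd X (i0 : ℕ) ω = 0} := rfl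
        rw [this]
        exact null_D hn hXmeas hXunif hXindep i0.2
      rw [Finset.prod_eq_zero hi0 hf0]
      exact measure_mono_null (Set.biInter_subset_of_mem hi0) hf0
  exact iIndepSets.iIndep h_le π h_pi h_gen h_ind

end Final

end CoverTimeAux


open CoverTimeAux in
/-- Let `(X t)_{t ≥ 1}` be i.i.d. uniform on `Fin n` (`n ≥ 1`) and let
`τ i` be the first time exactly `i` distinct values have appeared (`τ 0 = 0`, `τ n = T`).
Then the increments `(τ (i+1) - τ i)` for `0 ≤ i ≤ n-1` are mutually independent and each
is geometric with success probability `(n-i)/n`: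
`P(τ (i+1) - τ i = s) = (i/n)^(s-1) * (n-i)/n` for every integer `s ≥ 1`. -/
theorem cover_time_increments_indep_geometric
    (n : ℕ) (hn : 1 ≤ n)
    (Ω : Type) (_ : MeasurableSpace Ω) (μ : Measure Ω) [IsProbabilityMeasure μ]
    (X : ℕ → Ω → Fin n)
    (hXmeas : ∀ t, Measurable (X t))
    (hXunif : ∀ t x, μ {ω | X t ω = x} = (n : ℝ≥0∞)⁻¹)
    (hXindep : iIndepFun X μ)
    (τ : ℕ → Ω → ℕ)
    (hτ : ∀ i ω, τ i ω = sInf {t | ((Finset.Icc 1 t).image (fun s => X s ω)).card = i}) :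
    iIndepFun
        (fun i : Fin n => fun ω => τ ((i : ℕ) + 1) ω - τ (i : ℕ) ω) μ ∧
      ∀ i : Fin n, ∀ s : ℕ, 1 ≤ s →
        μ {ω | τ ((i : ℕ) + 1) ω - τ (i : ℕ) ω = s}
          = ENNReal.ofReal (((i : ℝ) / n) ^ (s - 1) * ((n : ℝ) - (i : ℝ)) / n) := by
  have hτeq : ∀ i ω, τ i ω = tau X i ω := fun i ω => hτ i ω
  constructor
  · have hfun : (fun i : Fin n => fun ω => τ ((i : ℕ) + 1) ω - τ (i : ℕ) ω)
        = fun i : Fin n => Dd X (i : ℕ) := by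
      funext i ω
      rw [hτeq, hτeq]
      rfl
    rw [hfun]
    exact indep_Dd hn hXmeas hXunif hXindep
  · intro i s hs
    have hset : {ω | τ ((i : ℕ) + 1) ω - τ (i : ℕ) ω = s} = {ω | Dd X (i : ℕ) ω = s} := by
      ext ω
      simp only [Set.mem_setOf_eq, hτeq]
      rfl
    rw [hset, marginal hn hXmeas hXunif hXindep i s hs, q_ofReal hn i s]
end

section
/- Let V be a finite set with |V| = n, let S ⊆ V with |S| = k where 1 ≤ k ≤ n, and let 0 ≤ j ≤ n − k. The number of functions f : S → V such that f(s) ≠ s for every s ∈ S and such that the image f(S) contains exactly j elements outside S (i.e. |f(S) \ S| = j) equals ∑_{ℓ=j}^{k} C(k,ℓ)·C(n−k, j)·Surj(ℓ, j)·(k−1)^{k−ℓ}, where Surj(ℓ, j) denotes the number of surjective functions from a set of size ℓ onto a set of size j. -/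
open Finset

def Surj (ℓ j : ℕ) : ℕ :=
  Fintype.card {g : Fin ℓ → Fin j // Function.Surjective g}

lemma surj_card_eq {α β : Type*} [Fintype α] [Fintype β] [DecidableEq α] [DecidableEq β] :
    Fintype.card {g : α → β // Function.Surjective g}
      = Surj (Fintype.card α) (Fintype.card β) := by
  classical
  apply Fintype.card_congr
  refine Equiv.subtypeEquiv (Equiv.arrowCongr (Fintype.equivFin α) (Fintype.equivFin β)) ?_
  intro g
  simp [Equiv.arrowCongr, EquivLike.comp_surjective, EquivLike.surjective_comp]

lemma surj_eq_zero {ℓ j : ℕ} (h : ℓ < j) : Surj ℓ j = 0 := by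
  rw [Surj, Fintype.card_eq_zero_iff]
  refine ⟨fun ⟨g, hg⟩ => absurd (Fintype.card_le_of_surjective g hg) ?_⟩
  simpa using h.not_ge

lemma card_onto {α V : Type*} [Fintype α] [DecidableEq α] [Fintype V] [DecidableEq V] (B : Finset V) :
    Fintype.card {g : α → V // Finset.image g Finset.univ = B}
      = Surj (Fintype.card α) B.card := by
  classical
  rw [← Fintype.card_coe B, ← surj_card_eq]
  apply Fintype.card_congr
  refine ⟨fun g => ⟨fun a => ⟨g.1 a, by have := mem_image_of_mem g.1 (mem_univ a); rwa [g.2] at this⟩, ?_⟩,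
    fun g => ⟨fun a => (g.1 a : V), ?_⟩, fun g => Subtype.ext (funext fun a => rfl),
    fun g => Subtype.ext (funext fun a => rfl)⟩
  · rintro ⟨b, hb⟩
    rw [← g.2] at hb
    obtain ⟨a, -, ha⟩ := mem_image.1 hb
    exact ⟨a, Subtype.ext ha⟩
  · ext x
    simp only [mem_image, mem_univ, true_and]
    constructor
    · rintro ⟨a, rfl⟩; exact (g.1 a).2
    · intro hx; obtain ⟨a, ha⟩ := g.2 ⟨x, hx⟩; exact ⟨a, by rw [ha]⟩

lemma card_outside {α V : Type*} [Fintype α] [DecidableEq α] [Fintype V] [DecidableEq V]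
    (S : Finset V) (j : ℕ) :
    Fintype.card {g : α → V // (∀ a, g a ∉ S) ∧ (Finset.image g Finset.univ).card = j}
      = (Sᶜ.card).choose j * Surj (Fintype.card α) j := by
  classical
  rw [Fintype.card_subtype]
  rw [card_eq_sum_card_fiberwise (f := fun g : α → V => Finset.image g Finset.univ)
    (t := Sᶜ.powersetCard j) (fun g hg => ?_)]
  · refine (sum_congr rfl fun B hB => ?_).trans
      (by rw [sum_const, smul_eq_mul, card_powersetCard])
    rw [filter_filter]
    obtain ⟨hBsub, hBcard⟩ := mem_powersetCard.1 hB
    have : Finset.univ.filter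
        (fun g : α → V => ((∀ a, g a ∉ S) ∧ (Finset.image g Finset.univ).card = j)
          ∧ Finset.image g Finset.univ = B)
        = Finset.univ.filter (fun g : α → V => Finset.image g Finset.univ = B) := by
      refine filter_congr fun g _ => ?_
      constructor
      · exact fun h => h.2
      · intro h
        refine ⟨⟨fun a => ?_, by rw [h, hBcard]⟩, h⟩
        have : g a ∈ B := by rw [← h]; exact mem_image_of_mem _ (mem_univ a)
        simpa using hBsub this
    rw [this, ← Fintype.card_subtype, card_onto, hBcard]
  · rw [mem_coe, mem_filter] at hg
    refine mem_powersetCard.2 ⟨fun x hx => ?_, hg.2.2⟩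
    obtain ⟨a, -, rfl⟩ := mem_image.1 hx
    simpa using hg.2.1 a

lemma card_pi_mem {β V : Type*} [Fintype β] [DecidableEq β] [Fintype V] [DecidableEq V]
    (t : β → Finset V) :
    Fintype.card {h : β → V // ∀ b, h b ∈ t b} = ∏ b, (t b).card := by
  classical
  rw [Fintype.card_subtype]
  rw [show Finset.univ.filter (fun h : β → V => ∀ b, h b ∈ t b) = Fintype.piFinset t by
    ext h; simp [Fintype.mem_piFinset]]
  exact Fintype.card_piFinset t

lemma fiber_card {V : Type*} [Fintype V] [DecidableEq V] (S : Finset V) (j : ℕ)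
    (T : Finset ↥S) :
    Fintype.card {f : ↥S → V // ((∀ s : ↥S, f s ≠ (s : V)) ∧
        ((Finset.univ.image f) \ S).card = j) ∧
        Finset.univ.filter (fun s => f s ∉ S) = T}
      = Fintype.card {g : {x : ↥S // x ∈ T} → V //
          (∀ a, g a ∉ S) ∧ (Finset.image g Finset.univ).card = j}
        * Fintype.card {h : {x : ↥S // x ∉ T} → V // ∀ b, h b ∈ S.erase (b.1 : V)} := by
  classical
  rw [← Fintype.card_prod]
  apply Fintype.card_congr
  have key : ∀ f : ↥S → V, Finset.univ.filter (fun s => f s ∉ S) = T →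
      Finset.univ.image f \ S
        = Finset.univ.image (fun a : {x : ↥S // x ∈ T} => f a.1) := by
    intro f hT
    have hmem : ∀ s : ↥S, s ∈ T ↔ f s ∉ S := fun s => by
      rw [← hT, mem_filter]; simp
    ext x
    simp only [mem_sdiff, mem_image, mem_univ, true_and]
    constructor
    · rintro ⟨⟨s, rfl⟩, hx⟩
      exact ⟨⟨s, (hmem s).2 hx⟩, rfl⟩
    · rintro ⟨⟨s, hs⟩, rfl⟩
      exact ⟨⟨s, rfl⟩, (hmem s).1 hs⟩
  refine ⟨fun f => (⟨fun a => f.1 a.1, ?_, ?_⟩, ⟨fun b => f.1 b.1, ?_⟩),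
    fun p => ⟨fun s => if hs : s ∈ T then p.1.1 ⟨s, hs⟩ else p.2.1 ⟨s, hs⟩, ?_, ?_⟩,
    ?_, ?_⟩
  · -- g maps outside S
    intro a
    have hmem : ∀ s : ↥S, s ∈ T ↔ f.1 s ∉ S := fun s => by
      conv_lhs => rw [← f.2.2]
      simp
    exact (hmem a.1).1 a.2
  · -- image card of g is j
    rw [← key f.1 f.2.2]
    exact f.2.1.2
  · -- h maps into erase
    intro b
    have hmem : ∀ s : ↥S, s ∈ T ↔ f.1 s ∉ S := fun s => by
      conv_lhs => rw [← f.2.2]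
      simp
    exact mem_erase.2 ⟨f.2.1.1 b.1, not_not.1 (fun h => b.2 ((hmem b.1).2 h))⟩
  · -- invFun: f s ≠ s and image card
    constructor
    · intro s
      by_cases hs : s ∈ T
      · simp only [dif_pos hs]
        intro hc
        exact p.1.2.1 ⟨s, hs⟩ (hc ▸ s.2)
      · simp only [dif_neg hs]
        exact ne_of_mem_erase (p.2.2 ⟨s, hs⟩)
    · have hT : Finset.univ.filter
          (fun s : ↥S => (if hs : s ∈ T then p.1.1 ⟨s, hs⟩ else p.2.1 ⟨s, hs⟩) ∉ S) = T := by
        ext s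
        simp only [mem_filter, mem_univ, true_and]
        by_cases hs : s ∈ T
        · simp [dif_pos hs, hs, p.1.2.1 ⟨s, hs⟩]
        · simp [dif_neg hs, hs, mem_of_mem_erase (p.2.2 ⟨s, hs⟩)]
      rw [key _ hT]
      have : (fun a : {x : ↥S // x ∈ T} =>
          if hs : a.1 ∈ T then p.1.1 ⟨a.1, hs⟩ else p.2.1 ⟨a.1, hs⟩) = p.1.1 := by
        funext a
        rw [dif_pos a.2]
      rw [this]
      exact p.1.2.2
  · -- invFun: filter = T
    ext s
    simp only [mem_filter, mem_univ, true_and]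
    by_cases hs : s ∈ T
    · simp [dif_pos hs, hs, p.1.2.1 ⟨s, hs⟩]
    · simp [dif_neg hs, hs, mem_of_mem_erase (p.2.2 ⟨s, hs⟩)]
  · -- left_inv
    intro f
    refine Subtype.ext (funext fun s => ?_)
    by_cases hs : s ∈ T <;> simp [hs]
  · -- right_inv
    intro p
    refine Prod.ext (Subtype.ext (funext fun a => ?_)) (Subtype.ext (funext fun b => ?_))
    · exact dif_pos a.2
    · exact dif_neg b.2

/-- Let `|V| = n`, `S ⊆ V` with `|S| = k`, `1 ≤ k ≤ n`, and
`0 ≤ j ≤ n - k`. The number of functions `f : S → V` with `f s ≠ s` for all `s ∈ S` and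
`|f(S) \ S| = j` equals `∑_{ℓ=j}^{k} C(k,ℓ) * C(n-k,j) * Surj(ℓ,j) * (k-1)^(k-ℓ)`.
This is the combinatorial core of the frog model transition probability `p_{j,k}`. -/
theorem card_functions_hitting_j_new_vertices
    (V : Type) [Fintype V] [DecidableEq V] (n : ℕ) (hV : Fintype.card V = n)
    (S : Finset V) (k : ℕ) (hS : S.card = k) (hk1 : 1 ≤ k) (hkn : k ≤ n)
    (j : ℕ) (hj : j ≤ n - k) :
    Fintype.card {f : S → V //
        (∀ s : S, f s ≠ (s : V)) ∧ ((Finset.univ.image f) \ S).card = j}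
      = ∑ ℓ ∈ Finset.Icc j k,
          k.choose ℓ * (n - k).choose j * Surj ℓ j * (k - 1) ^ (k - ℓ) := by
  classical
  have hcS : Fintype.card ↥S = k := by rw [Fintype.card_coe, hS]
  rw [Fintype.card_subtype]
  rw [card_eq_sum_card_fiberwise (f := fun f : ↥S → V => Finset.univ.filter fun s => f s ∉ S)
    (t := (Finset.univ : Finset ↥S).powerset)
    (fun f _ => mem_powerset.2 (filter_subset _ _))]
  have hterm : ∀ T ∈ (Finset.univ : Finset ↥S).powerset,
      #(filter (fun f : ↥S → V => Finset.univ.filter (fun s => f s ∉ S) = T)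
        (filter (fun f : ↥S → V => (∀ s : ↥S, f s ≠ (s : V)) ∧
          ((Finset.univ.image f) \ S).card = j) Finset.univ))
      = (n - k).choose j * Surj #T j * (k - 1) ^ (k - #T) := by
    intro T _
    rw [filter_filter, ← Fintype.card_subtype, fiber_card S j T,
      card_outside S j, card_pi_mem]
    have h1 : Fintype.card {x : ↥S // x ∈ T} = #T :=
      Fintype.card_of_subtype T (fun _ => Iff.rfl)
    have h2 : Fintype.card {x : ↥S // x ∉ T} = k - #T := by
      rw [Fintype.card_subtype_compl, h1, hcS]
    have h3 : Sᶜ.card = n - k := by rw [card_compl, hV, hS]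
    have h4 : ∏ b : {x : ↥S // x ∉ T}, (S.erase ((b : ↥S) : V)).card
        = (k - 1) ^ (k - #T) := by
      have he : ∀ b : {x : ↥S // x ∉ T}, (S.erase ((b : ↥S) : V)).card = k - 1 := fun b => by
        rw [card_erase_of_mem b.1.2, hS]
      rw [Finset.prod_congr rfl (fun b _ => he b), Finset.prod_const, card_univ, h2]
    rw [h1, h3, h4]
  rw [Finset.sum_congr rfl hterm]
  rw [Finset.sum_powerset_apply_card (fun m => (n - k).choose j * Surj m j * (k - 1) ^ (k - m))]
  have huniv : #(Finset.univ : Finset ↥S) = k := by rw [card_univ, hcS]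
  rw [huniv]
  have hmul : ∀ m, k.choose m • ((n - k).choose j * Surj m j * (k - 1) ^ (k - m))
      = k.choose m * (n - k).choose j * Surj m j * (k - 1) ^ (k - m) := fun m => by
    rw [smul_eq_mul]; ring
  rw [Finset.sum_congr rfl (fun m _ => hmul m)]
  symm
  apply Finset.sum_subset
  · intro ℓ hℓ
    exact mem_range.2 (Nat.lt_succ_of_le (mem_Icc.1 hℓ).2)
  · intro ℓ hin hnot
    have hℓk : ℓ ≤ k := Nat.lt_succ_iff.1 (mem_range.1 hin)
    have hlj : ℓ < j := by
      by_contra h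
      exact hnot (mem_Icc.2 ⟨le_of_not_gt h, hℓk⟩)
    rw [surj_eq_zero hlj]
    ring
end

section
/- Let n ≥ 3 and let k ≥ 1 satisfy 2k < n. Let S ⊆ Fin n be any subset with |S| = n − k (the sleeping vertices), and let X_1, …, X_k be i.i.d. random variables each uniformly distributed on Fin n. Then the probability that at least ⌈k/10⌉ distinct elements of S are visited satisfies P(|S ∩ {X_1, …, X_k}| ≥ ⌈k/10⌉) ≥ 1/37. -/
open MeasureTheory ProbabilityTheory Finset
open scoped ENNReal

lemma frog_aux_comb {k n : ℕ} (S : Finset (Fin n)) (g : Fin k → Fin n) :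
    (univ.filter fun i => g i ∈ S).card ≤
      (S ∩ univ.image g).card +
      (univ.filter fun p : Fin k × Fin k => p.1 < p.2 ∧ g p.1 = g p.2).card := by
  classical
  set T := univ.filter fun i => g i ∈ S with hT
  set Q := univ.filter fun p : Fin k × Fin k => p.1 < p.2 ∧ g p.1 = g p.2 with hQ
  set V := S ∩ univ.image g with hV
  have hfib : T.card = ∑ v ∈ V, (T.filter fun i => g i = v).card := by
    apply Finset.card_eq_sum_card_fiberwise
    intro i hi
    simp only [hT, Finset.mem_coe, mem_filter, mem_univ, true_and] at hi
    simp [hV, hi, Finset.mem_image]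
  have hbound : ∀ v ∈ V, (T.filter fun i => g i = v).card ≤
      1 + (Q.filter fun p => g p.1 = v).card := by
    intro v _
    set Tv := T.filter fun i => g i = v with hTv
    rcases Tv.eq_empty_or_nonempty with h | h
    · simp [h]
    · have hmin := Tv.min'_mem h
      have hcard : Tv.card = (Tv.erase (Tv.min' h)).card + 1 :=
        (Finset.card_erase_add_one hmin).symm
      have hinj : (Tv.erase (Tv.min' h)).card ≤ (Q.filter fun p => g p.1 = v).card := by
        apply Finset.card_le_card_of_injOn (fun j => (Tv.min' h, j))
        · intro j hj
          have hjTv : j ∈ Tv := Finset.mem_of_mem_erase hj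
          have hjne : j ≠ Tv.min' h := Finset.ne_of_mem_erase hj
          have hlt : Tv.min' h < j := lt_of_le_of_ne (Tv.min'_le j hjTv) (Ne.symm hjne)
          have h0 : g (Tv.min' h) = v := (Finset.mem_filter.mp hmin).2
          have h1 : g j = v := (Finset.mem_filter.mp hjTv).2
          simp [hQ, hlt, h0, h1]
        · intro a _ b _ hab
          exact (Prod.mk.injEq _ _ _ _).mp hab |>.2
      omega
  have hsum : ∑ v ∈ V, (Q.filter fun p => g p.1 = v).card ≤ Q.card := by
    set Q' := Q.filter fun p => g p.1 ∈ V with hQ'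
    have h1 : Q'.card = ∑ v ∈ V, (Q'.filter fun p => g p.1 = v).card := by
      apply Finset.card_eq_sum_card_fiberwise
      intro p hp
      exact (Finset.mem_filter.mp hp).2
    have h2 : ∀ v ∈ V, (Q.filter fun p => g p.1 = v) = (Q'.filter fun p => g p.1 = v) := by
      intro v hv
      ext p
      simp only [hQ', Finset.mem_filter]
      constructor
      · rintro ⟨hpQ, hpv⟩; exact ⟨⟨hpQ, hpv ▸ hv⟩, hpv⟩
      · rintro ⟨⟨hpQ, _⟩, hpv⟩; exact ⟨hpQ, hpv⟩
    calc ∑ v ∈ V, (Q.filter fun p => g p.1 = v).card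
        = ∑ v ∈ V, (Q'.filter fun p => g p.1 = v).card := by
          apply Finset.sum_congr rfl; intro v hv; rw [h2 v hv]
      _ = Q'.card := h1.symm
      _ ≤ Q.card := Finset.card_le_card (Finset.filter_subset _ _)
  calc T.card = ∑ v ∈ V, (T.filter fun i => g i = v).card := hfib
    _ ≤ ∑ v ∈ V, (1 + (Q.filter fun p => g p.1 = v).card) := Finset.sum_le_sum hbound
    _ = V.card + ∑ v ∈ V, (Q.filter fun p => g p.1 = v).card := by
        rw [Finset.sum_add_distrib, Finset.sum_const, smul_eq_mul, mul_one]
    _ ≤ V.card + Q.card := by omega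

lemma frog_aux_pairs (k : ℕ) :
    2 * ((univ : Finset (Fin k × Fin k)).filter fun p => p.1 < p.2).card ≤ k * (k - 1) := by
  classical
  set P := (univ : Finset (Fin k × Fin k)).filter fun p => p.1 < p.2 with hP
  have himg : (P.image Prod.swap).card = P.card :=
    Finset.card_image_of_injective _ Prod.swap_injective
  have hdisj : Disjoint P (P.image Prod.swap) := by
    rw [Finset.disjoint_left]
    intro p hp hp'
    simp only [hP, Finset.mem_filter, Finset.mem_image] at hp hp'
    obtain ⟨q, hq, hqp⟩ := hp'
    have h1 : q.2 < q.1 := by rw [← hqp] at hp; exact hp.2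
    exact absurd hq.2 (not_lt.mpr h1.le)
  have hsub : P ∪ P.image Prod.swap ⊆ (univ : Finset (Fin k)).offDiag := by
    intro p hp
    rw [Finset.mem_union] at hp
    rcases hp with hp | hp
    · simp only [hP, Finset.mem_filter] at hp
      simp [Finset.mem_offDiag, hp.2.ne]
    · simp only [Finset.mem_image, hP, Finset.mem_filter] at hp
      obtain ⟨q, hq, hqp⟩ := hp
      subst hqp
      simp [Finset.mem_offDiag, hq.2.ne']
  have hle := Finset.card_le_card hsub
  rw [Finset.card_union_of_disjoint hdisj, himg, Finset.offDiag_card, Finset.card_univ,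
    Fintype.card_fin] at hle
  have hk2 : k * (k - 1) = k * k - k := by
    cases k with
    | zero => simp
    | succ m => simp [Nat.succ_sub_one]; ring_nf; omega
  omega

lemma frog_aux_numeric (n k a c P : ℕ) (hk : 1 ≤ k) (hnc : n = k + c) (hck : k + 1 ≤ c)
    (ha : 10 * a + 1 ≤ k) (hP : 2 * P + k ≤ k * k) :
    (a : ℝ≥0∞) + P * (n : ℝ≥0∞)⁻¹ + k * (37 : ℝ≥0∞)⁻¹ ≤ k * (c * (n : ℝ≥0∞)⁻¹) := by
  have hn0 : (n : ℝ≥0∞) ≠ 0 := by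
    simp only [ne_eq, Nat.cast_eq_zero]; omega
  have hnt : (n : ℝ≥0∞) ≠ ⊤ := ENNReal.natCast_ne_top n
  have hn1 : (n : ℝ≥0∞)⁻¹ * n = 1 := ENNReal.inv_mul_cancel hn0 hnt
  have h371 : (37 : ℝ≥0∞)⁻¹ * 37 = 1 := ENNReal.inv_mul_cancel (by norm_num) (by norm_num)
  have hc0 : (37 : ℝ≥0∞) * n ≠ 0 := by
    simp only [ne_eq, mul_eq_zero, not_or]; exact ⟨by norm_num, hn0⟩
  have hct : (37 : ℝ≥0∞) * n ≠ ⊤ := ENNReal.mul_ne_top (by norm_num) hnt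
  rw [← ENNReal.mul_le_mul_iff_left hc0 hct]
  have e1 : (P : ℝ≥0∞) * (n : ℝ≥0∞)⁻¹ * (37 * n) = 37 * P := by
    calc (P : ℝ≥0∞) * (n : ℝ≥0∞)⁻¹ * (37 * n) = 37 * P * ((n : ℝ≥0∞)⁻¹ * n) := by ring
      _ = 37 * P := by rw [hn1, mul_one]
  have e2 : (k : ℝ≥0∞) * (37 : ℝ≥0∞)⁻¹ * (37 * n) = k * n := by
    calc (k : ℝ≥0∞) * (37 : ℝ≥0∞)⁻¹ * (37 * n) = k * n * ((37 : ℝ≥0∞)⁻¹ * 37) := by ring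
      _ = k * n := by rw [h371, mul_one]
  have e3 : (k : ℝ≥0∞) * ((c : ℝ≥0∞) * (n : ℝ≥0∞)⁻¹) * (37 * n) = 37 * (k * c) := by
    calc (k : ℝ≥0∞) * ((c : ℝ≥0∞) * (n : ℝ≥0∞)⁻¹) * (37 * n)
        = 37 * (k * c) * ((n : ℝ≥0∞)⁻¹ * n) := by ring
      _ = 37 * (k * c) := by rw [hn1, mul_one]
  rw [add_mul, add_mul, e1, e2, e3]
  have key : a * (37 * n) + 37 * P + k * n ≤ 37 * (k * c) := by
    subst hnc
    nlinarith [mul_le_mul_of_nonneg_left ha (Nat.zero_le (k + c)),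
      Nat.mul_le_mul_left k hck, Nat.zero_le (a * k), Nat.zero_le (a * c)]
  calc (a : ℝ≥0∞) * (37 * n) + 37 * P + k * n
      = ((a * (37 * n) + 37 * P + k * n : ℕ) : ℝ≥0∞) := by push_cast; ring
    _ ≤ ((37 * (k * c) : ℕ) : ℝ≥0∞) := by exact_mod_cast key
    _ = 37 * (k * c) := by push_cast; ring

/-- Let `n ≥ 3` and `k ≥ 1` with `2k < n`. Let `S ⊆ Fin n` with
`|S| = n - k` (the sleeping vertices), and let `X 1, …, X k` be i.i.d. uniform on `Fin n`
(one step of the `k` awake frogs on `K_n∘`). Then the probability that at least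
`⌈k/10⌉` distinct elements of `S` are visited is at least `1/37`:
`P(|S ∩ {X 1, …, X k}| ≥ ⌈k/10⌉) ≥ 1/37`. -/
theorem frog_model_wake_tenth_probability_ge
    (n k : ℕ) (hn : 3 ≤ n) (hk : 1 ≤ k) (hkn : 2 * k < n)
    (S : Finset (Fin n)) (hS : S.card = n - k)
    (Ω : Type) (_ : MeasurableSpace Ω) (μ : Measure Ω) [IsProbabilityMeasure μ]
    (X : Fin k → Ω → Fin n)
    (hXmeas : ∀ i, Measurable (X i))
    (hXunif : ∀ i x, μ {ω | X i ω = x} = (n : ℝ≥0∞)⁻¹)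
    (hXindep : iIndepFun X μ) :
    (37 : ℝ≥0∞)⁻¹
      ≤ μ {ω | ⌈(k : ℚ) / 10⌉₊ ≤ (S ∩ Finset.univ.image (fun i => X i ω)).card} := by
  classical
  have hn0 : (n : ℝ≥0∞) ≠ 0 := by simp only [ne_eq, Nat.cast_eq_zero]; omega
  have hnt : (n : ℝ≥0∞) ≠ ⊤ := ENNReal.natCast_ne_top n
  set m := ⌈(k : ℚ) / 10⌉₊ with hm
  -- basic facts about m
  have hm1 : 1 ≤ m := by
    rw [hm]
    apply Nat.ceil_pos.mpr
    positivity
  have hm10 : 10 * (m - 1) + 1 ≤ k := by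
    have h1 : ((m - 1 : ℕ) : ℚ) < (k : ℚ) / 10 := by
      rw [← Nat.lt_ceil]
      omega
    have h2 : ((m - 1 : ℕ) : ℚ) * 10 < (k : ℚ) := by linarith
    have h3 : (m - 1) * 10 < k := by exact_mod_cast h2
    omega
  -- key sets and functions
  set E := {ω | m ≤ (S ∩ Finset.univ.image (fun i => X i ω)).card} with hE
  set P0 := (univ : Finset (Fin k × Fin k)).filter fun p => p.1 < p.2 with hP0
  have hY : Measurable (fun ω i => X i ω) := measurable_pi_lambda _ hXmeas
  have hEmeas : MeasurableSet E := by
    have : E = (fun ω i => X i ω) ⁻¹'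
        {y : Fin k → Fin n | m ≤ (S ∩ Finset.univ.image y).card} := rfl
    rw [this]
    exact hY (Set.to_countable _).measurableSet
  -- measure of landing in S
  have hpre : ∀ (i : Fin k) (x : Fin n), X i ⁻¹' {x} = {ω | X i ω = x} := by
    intro i x; ext ω; simp
  have hinS : ∀ i : Fin k, μ {ω | X i ω ∈ S} = S.card * (n : ℝ≥0∞)⁻¹ := by
    intro i
    have hset : {ω | X i ω ∈ S} = ⋃ x ∈ S, X i ⁻¹' {x} := by
      ext ω; simp
    rw [hset, measure_biUnion_finset ?hd ?hm]
    · simp only [hpre, hXunif]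
      rw [Finset.sum_const, nsmul_eq_mul]
    case hd =>
      intro x _ y _ hxy
      simp only [Function.onFun, hpre]
      rw [Set.disjoint_left]
      intro ω h1 h2
      exact hxy (h1 ▸ h2 ▸ rfl)
    case hm =>
      intro x _
      exact (hXmeas i) (MeasurableSet.singleton x)
  -- measure of a collision
  have hpair : ∀ i j : Fin k, i ≠ j → μ {ω | X i ω = X j ω} = (n : ℝ≥0∞)⁻¹ := by
    intro i j hij
    have hset : {ω | X i ω = X j ω} = ⋃ x : Fin n, (X i ⁻¹' {x} ∩ X j ⁻¹' {x}) := by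
      ext ω
      simp only [Set.mem_setOf_eq, Set.mem_iUnion, Set.mem_inter_iff, Set.mem_preimage,
        Set.mem_singleton_iff]
      constructor
      · intro h; exact ⟨X j ω, h, rfl⟩
      · rintro ⟨x, h1, h2⟩; rw [h1, h2]
    rw [hset, measure_iUnion ?hd ?hm, tsum_fintype]
    · have heach : ∀ x : Fin n,
          μ (X i ⁻¹' {x} ∩ X j ⁻¹' {x}) = (n : ℝ≥0∞)⁻¹ * (n : ℝ≥0∞)⁻¹ := by
        intro x
        rw [(hXindep.indepFun hij).measure_inter_preimage_eq_mul {x} {x}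
          (MeasurableSet.singleton x) (MeasurableSet.singleton x), hpre, hpre, hXunif, hXunif]
      simp only [heach]
      rw [Finset.sum_const, Finset.card_univ, Fintype.card_fin, nsmul_eq_mul, ← mul_assoc,
        ENNReal.mul_inv_cancel hn0 hnt, one_mul]
    case hd =>
      intro x y hxy
      simp only [Function.onFun]
      rw [Set.disjoint_left]
      rintro ω ⟨h1, _⟩ ⟨h2, _⟩
      simp only [Set.mem_preimage, Set.mem_singleton_iff] at h1 h2
      exact hxy (h1 ▸ h2 ▸ rfl)
    case hm =>
      intro x
      exact ((hXmeas i) (MeasurableSet.singleton x)).inter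
        ((hXmeas j) (MeasurableSet.singleton x))
  -- integral of N
  have hNint : ∫⁻ ω, ((univ.filter fun i => X i ω ∈ S).card : ℝ≥0∞) ∂μ
      = (k : ℝ≥0∞) * (S.card * (n : ℝ≥0∞)⁻¹) := by
    have hrw : (fun ω => ((univ.filter fun i => X i ω ∈ S).card : ℝ≥0∞))
        = fun ω => ∑ i : Fin k, if X i ω ∈ S then (1 : ℝ≥0∞) else 0 := by
      funext ω
      rw [Finset.card_filter, Nat.cast_sum]
      exact Finset.sum_congr rfl fun i _ => by split <;> simp
    rw [hrw, lintegral_finset_sum]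
    · have heach : ∀ i : Fin k, ∫⁻ ω, (if X i ω ∈ S then (1 : ℝ≥0∞) else 0) ∂μ
          = S.card * (n : ℝ≥0∞)⁻¹ := by
        intro i
        have hms : MeasurableSet {ω | X i ω ∈ S} := by
          have : {ω | X i ω ∈ S} = X i ⁻¹' ↑S := by ext ω; simp
          rw [this]
          exact (hXmeas i) (Set.to_countable _).measurableSet
        have hind : (fun ω => if X i ω ∈ S then (1 : ℝ≥0∞) else 0)
            = Set.indicator {ω | X i ω ∈ S} (fun _ => (1 : ℝ≥0∞)) := by
          funext ω
          simp [Set.indicator_apply, Set.mem_setOf_eq]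
        rw [hind, lintegral_indicator_const hms, one_mul, hinS]
      simp only [heach]
      rw [Finset.sum_const, Finset.card_univ, Fintype.card_fin, nsmul_eq_mul]
    · intro i _
      have hms : MeasurableSet {ω | X i ω ∈ S} := by
        have : {ω | X i ω ∈ S} = X i ⁻¹' ↑S := by ext ω; simp
        rw [this]
        exact (hXmeas i) (Set.to_countable _).measurableSet
      exact Measurable.ite hms measurable_const measurable_const
  -- integral of C
  have hCint : ∫⁻ ω, ((univ.filter fun p : Fin k × Fin k =>
        p.1 < p.2 ∧ X p.1 ω = X p.2 ω).card : ℝ≥0∞) ∂μ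
      = (P0.card : ℝ≥0∞) * (n : ℝ≥0∞)⁻¹ := by
    have hrw : (fun ω => ((univ.filter fun p : Fin k × Fin k =>
          p.1 < p.2 ∧ X p.1 ω = X p.2 ω).card : ℝ≥0∞))
        = fun ω => ∑ p ∈ P0, if X p.1 ω = X p.2 ω then (1 : ℝ≥0∞) else 0 := by
      funext ω
      rw [← Finset.filter_filter, Finset.card_filter, Nat.cast_sum]
      exact Finset.sum_congr rfl fun p _ => by split <;> simp
    rw [hrw, lintegral_finset_sum]
    · have heach : ∀ p ∈ P0, ∫⁻ ω, (if X p.1 ω = X p.2 ω then (1 : ℝ≥0∞) else 0) ∂μ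
          = (n : ℝ≥0∞)⁻¹ := by
        intro p hp
        have hplt : p.1 < p.2 := (Finset.mem_filter.mp hp).2
        have hms : MeasurableSet {ω | X p.1 ω = X p.2 ω} := by
          have : {ω | X p.1 ω = X p.2 ω}
              = ⋃ x : Fin n, (X p.1 ⁻¹' {x} ∩ X p.2 ⁻¹' {x}) := by
            ext ω
            simp only [Set.mem_setOf_eq, Set.mem_iUnion, Set.mem_inter_iff, Set.mem_preimage,
              Set.mem_singleton_iff]
            constructor
            · intro h; exact ⟨X p.2 ω, h, rfl⟩
            · rintro ⟨x, h1, h2⟩; rw [h1, h2]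
          rw [this]
          exact MeasurableSet.iUnion fun x =>
            ((hXmeas p.1) (MeasurableSet.singleton x)).inter
              ((hXmeas p.2) (MeasurableSet.singleton x))
        have hind : (fun ω => if X p.1 ω = X p.2 ω then (1 : ℝ≥0∞) else 0)
            = Set.indicator {ω | X p.1 ω = X p.2 ω} (fun _ => (1 : ℝ≥0∞)) := by
          funext ω
          simp [Set.indicator_apply, Set.mem_setOf_eq]
        rw [hind, lintegral_indicator_const hms, one_mul, hpair p.1 p.2 (ne_of_lt hplt)]
      rw [Finset.sum_congr rfl heach, Finset.sum_const, nsmul_eq_mul]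
    · intro p _
      have hms : MeasurableSet {ω | X p.1 ω = X p.2 ω} := by
        have : {ω | X p.1 ω = X p.2 ω}
            = ⋃ x : Fin n, (X p.1 ⁻¹' {x} ∩ X p.2 ⁻¹' {x}) := by
          ext ω
          simp only [Set.mem_setOf_eq, Set.mem_iUnion, Set.mem_inter_iff, Set.mem_preimage,
            Set.mem_singleton_iff]
          constructor
          · intro h; exact ⟨X p.2 ω, h, rfl⟩
          · rintro ⟨x, h1, h2⟩; rw [h1, h2]
        rw [this]
        exact MeasurableSet.iUnion fun x =>
          ((hXmeas p.1) (MeasurableSet.singleton x)).inter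
            ((hXmeas p.2) (MeasurableSet.singleton x))
      exact Measurable.ite hms measurable_const measurable_const
  -- measurability of C as a function
  have hCmeas : Measurable (fun ω => ((univ.filter fun p : Fin k × Fin k =>
      p.1 < p.2 ∧ X p.1 ω = X p.2 ω).card : ℝ≥0∞)) := by
    have h2 := Measurable.comp (g := fun y : Fin k → Fin n =>
        ((univ.filter fun p : Fin k × Fin k => p.1 < p.2 ∧ y p.1 = y p.2).card : ℝ≥0∞))
      (measurable_of_countable _) hY
    exact h2
  -- pointwise inequality N ≤ Z + C, integrated
  have key1 : ∫⁻ ω, ((univ.filter fun i => X i ω ∈ S).card : ℝ≥0∞) ∂μ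
      ≤ ∫⁻ ω, ((S ∩ Finset.univ.image (fun i => X i ω)).card : ℝ≥0∞) ∂μ
        + (P0.card : ℝ≥0∞) * (n : ℝ≥0∞)⁻¹ := by
    rw [← hCint, ← lintegral_add_right _ hCmeas]
    apply lintegral_mono
    intro ω
    have := frog_aux_comb S (fun i => X i ω)
    calc ((univ.filter fun i => X i ω ∈ S).card : ℝ≥0∞)
        ≤ (((S ∩ Finset.univ.image (fun i => X i ω)).card
            + (univ.filter fun p : Fin k × Fin k =>
                p.1 < p.2 ∧ X p.1 ω = X p.2 ω).card : ℕ) : ℝ≥0∞) := by exact_mod_cast this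
      _ = _ := by push_cast; ring
  -- upper bound on integral of Z
  have key4 : ∫⁻ ω, ((S ∩ Finset.univ.image (fun i => X i ω)).card : ℝ≥0∞) ∂μ
      ≤ ((m - 1 : ℕ) : ℝ≥0∞) + (k : ℝ≥0∞) * μ E := by
    have hpt : ∀ ω, ((S ∩ Finset.univ.image (fun i => X i ω)).card : ℝ≥0∞)
        ≤ ((m - 1 : ℕ) : ℝ≥0∞) + E.indicator (fun _ => (k : ℝ≥0∞)) ω := by
      intro ω
      by_cases hω : ω ∈ E
      · rw [Set.indicator_of_mem hω]
        have hZk : (S ∩ Finset.univ.image (fun i => X i ω)).card ≤ k := by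
          calc (S ∩ Finset.univ.image (fun i => X i ω)).card
              ≤ (Finset.univ.image (fun i => X i ω)).card :=
                Finset.card_le_card Finset.inter_subset_right
            _ ≤ (univ : Finset (Fin k)).card := Finset.card_image_le
            _ = k := by simp
        calc ((S ∩ Finset.univ.image (fun i => X i ω)).card : ℝ≥0∞)
            ≤ (k : ℝ≥0∞) := by exact_mod_cast hZk
          _ ≤ _ := le_add_self
      · rw [Set.indicator_of_notMem hω, add_zero]
        have : (S ∩ Finset.univ.image (fun i => X i ω)).card ≤ m - 1 := by
          have : ¬ m ≤ (S ∩ Finset.univ.image (fun i => X i ω)).card := hω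
          omega
        exact_mod_cast this
    calc ∫⁻ ω, ((S ∩ Finset.univ.image (fun i => X i ω)).card : ℝ≥0∞) ∂μ
        ≤ ∫⁻ ω, (((m - 1 : ℕ) : ℝ≥0∞) + E.indicator (fun _ => (k : ℝ≥0∞)) ω) ∂μ :=
          lintegral_mono hpt
      _ = ((m - 1 : ℕ) : ℝ≥0∞) + (k : ℝ≥0∞) * μ E := by
          rw [lintegral_add_left measurable_const, lintegral_const,
            lintegral_indicator_const hEmeas, measure_univ, mul_one]
  -- combine
  have hck : k + 1 ≤ S.card := by omega
  have hScard : (n : ℕ) = k + S.card := by omega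
  have hPcard : 2 * P0.card + k ≤ k * k := by
    have h1 := frog_aux_pairs k
    rw [← hP0] at h1
    have hk2 : k * (k - 1) + k = k * k := by
      cases k with
      | zero => simp
      | succ l => simp [Nat.succ_sub_one]; ring
    omega
  have hnum : ((m - 1 : ℕ) : ℝ≥0∞) + (P0.card : ℝ≥0∞) * (n : ℝ≥0∞)⁻¹
      + (k : ℝ≥0∞) * (37 : ℝ≥0∞)⁻¹ ≤ (k : ℝ≥0∞) * (S.card * (n : ℝ≥0∞)⁻¹) :=
    frog_aux_numeric n k (m - 1) S.card P0.card hk hScard hck hm10 hPcard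
  have hchain : (k : ℝ≥0∞) * ((S.card : ℝ≥0∞) * (n : ℝ≥0∞)⁻¹)
      ≤ ((m - 1 : ℕ) : ℝ≥0∞) + (P0.card : ℝ≥0∞) * (n : ℝ≥0∞)⁻¹ + (k : ℝ≥0∞) * μ E := by
    calc (k : ℝ≥0∞) * ((S.card : ℝ≥0∞) * (n : ℝ≥0∞)⁻¹)
        = ∫⁻ ω, ((univ.filter fun i => X i ω ∈ S).card : ℝ≥0∞) ∂μ := hNint.symm
      _ ≤ ∫⁻ ω, ((S ∩ Finset.univ.image (fun i => X i ω)).card : ℝ≥0∞) ∂μ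
            + (P0.card : ℝ≥0∞) * (n : ℝ≥0∞)⁻¹ := key1
      _ ≤ (((m - 1 : ℕ) : ℝ≥0∞) + (k : ℝ≥0∞) * μ E)
            + (P0.card : ℝ≥0∞) * (n : ℝ≥0∞)⁻¹ := add_le_add_left key4 _
      _ = ((m - 1 : ℕ) : ℝ≥0∞) + (P0.card : ℝ≥0∞) * (n : ℝ≥0∞)⁻¹ + (k : ℝ≥0∞) * μ E := by
          ring
  have hfinal : ((m - 1 : ℕ) : ℝ≥0∞) + (P0.card : ℝ≥0∞) * (n : ℝ≥0∞)⁻¹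
      + (k : ℝ≥0∞) * (37 : ℝ≥0∞)⁻¹
      ≤ ((m - 1 : ℕ) : ℝ≥0∞) + (P0.card : ℝ≥0∞) * (n : ℝ≥0∞)⁻¹ + (k : ℝ≥0∞) * μ E :=
    le_trans hnum hchain
  have hDt : ((m - 1 : ℕ) : ℝ≥0∞) + (P0.card : ℝ≥0∞) * (n : ℝ≥0∞)⁻¹ ≠ ⊤ :=
    ENNReal.add_ne_top.mpr ⟨ENNReal.natCast_ne_top _,
      ENNReal.mul_ne_top (ENNReal.natCast_ne_top _) (ENNReal.inv_ne_top.mpr hn0)⟩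
  have hmul : (k : ℝ≥0∞) * (37 : ℝ≥0∞)⁻¹ ≤ (k : ℝ≥0∞) * μ E :=
    (ENNReal.add_le_add_iff_left hDt).mp hfinal
  have hk0 : (k : ℝ≥0∞) ≠ 0 := by simp only [ne_eq, Nat.cast_eq_zero]; omega
  exact (ENNReal.mul_le_mul_iff_right hk0 (ENNReal.natCast_ne_top k)).mp hmul
end
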